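/- arXiv:2109.13819 — 11 statements merged into one kernel-verified Lean document; each statement's English description precedes it below -/
import Mathlib

section
/- If μ ∈ ℝ satisfies μ < λ₁(M), and f, g ∈ D are vectors with ‖f‖ = ‖g‖ = 1, Mf = μf and Mg = μg, then g = f or g = −f; in other words, below the second variational eigenvalue, a unit eigenvector is unique up to sign. -/
open RealInnerProductSpace

variable {E : Type*} [NormedAddCommGroup E] [InnerProductSpace ℝ E]

/-- The set of infima over which the supremum defining `λ₁(T)` is taken. -/
def secondSpectrumSet (D : Submodule ℝ E) (T : D →ₗ[ℝ] E) : Set ℝ :=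
  {y : ℝ | ∃ V : Submodule ℝ E, Module.finrank ℝ V = 1 ∧
    y = sInf {x : ℝ | ∃ f : D, ‖(f : E)‖ = 1 ∧ (f : E) ∈ Vᗮ ∧ x = ⟪(f : E), T f⟫}}

/-- The second variational eigenvalue
`λ₁(T) := sup_V inf {⟨f, Tf⟩ : f ∈ D, ‖f‖ = 1, f ⊥ V}`, the supremum ranging over
one-dimensional subspaces `V` of `E`. -/
noncomputable def secondSpectrum (D : Submodule ℝ E) (T : D →ₗ[ℝ] E) : ℝ :=
  sSup (secondSpectrumSet D T)

/-- Below the second variational eigenvalue, a unit eigenvector of a densely defined symmetric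
operator with semibounded quadratic form is unique up to sign: if `μ < λ₁(M)` and `f, g` are
unit eigenvectors with `Mf = μf`, `Mg = μg`, then `g = f` or `g = −f`. -/
theorem eigenvector_unique_up_to_sign_below_secondSpectrum [CompleteSpace E]
    (D : Submodule ℝ E) (hD : Dense (D : Set E))
    (M : D →ₗ[ℝ] E)
    (hsym : ∀ f g : D, ⟪M f, (g : E)⟫ = ⟪(f : E), M g⟫)
    (c : ℝ) (hc : ∀ f : D, ‖(f : E)‖ = 1 → c ≤ ⟪(f : E), M f⟫)
    (hbdd : BddAbove (secondSpectrumSet D M))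
    (μ : ℝ) (hμ : μ < secondSpectrum D M)
    (f g : D) (hf : ‖(f : E)‖ = 1) (hg : ‖(g : E)‖ = 1)
    (hfe : M f = μ • (f : E)) (hge : M g = μ • (g : E)) :
    g = f ∨ g = -f := by
  by_contra hcon
  push_neg at hcon
  obtain ⟨hgf, hgf'⟩ := hcon
  have hf0 : (f : E) ≠ 0 := by
    intro h; rw [h, norm_zero] at hf; exact one_ne_zero hf.symm
  -- linear independence of f and g
  have hindep : ∀ α β : ℝ, α • (f : E) + β • (g : E) = 0 → α = 0 ∧ β = 0 := by
    intro α β hαβ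
    by_cases hβ : β = 0
    · subst hβ
      simp only [zero_smul, add_zero, smul_eq_zero] at hαβ
      rcases hαβ with h | h
      · exact ⟨h, rfl⟩
      · exact absurd h hf0
    · exfalso
      have h1 : β • (g : E) = (-α) • (f : E) := by
        rw [neg_smul, eq_neg_iff_add_eq_zero, add_comm]; exact hαβ
      have hge' : (g : E) = (-(α / β)) • (f : E) := by
        have h2 := congrArg (fun x => β⁻¹ • x) h1
        simp only [smul_smul, inv_mul_cancel₀ hβ, one_smul] at h2
        rw [h2]
        congr 1
        field_simp
      have habs : |(-(α / β))| = 1 := by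
        have := congrArg norm hge'
        rw [norm_smul, hf, hg, Real.norm_eq_abs] at this
        linarith [this]
      rcases (abs_eq (by norm_num : (0:ℝ) ≤ 1)).mp habs with h1 | h1
      · apply hgf
        apply Subtype.ext
        rw [hge', h1, one_smul]
      · apply hgf'
        apply Subtype.ext
        rw [hge', h1, neg_one_smul]
        rfl
  -- key: for every 1-dimensional V there is a unit eigenvector in Vᗮ
  have key : ∀ V : Submodule ℝ E, Module.finrank ℝ V = 1 →
      ∃ h : D, ‖(h : E)‖ = 1 ∧ (h : E) ∈ Vᗮ ∧ M h = μ • (h : E) := by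
    intro V hV
    haveI : Module.Free ℝ V := Module.Free.of_divisionRing ℝ V
    obtain ⟨v, hv0, hvspan⟩ := finrank_eq_one_iff'.mp hV
    -- v : V; every element of V is a multiple of v
    have hmem : ∀ h : E, ⟪(v : E), h⟫ = 0 → h ∈ Vᗮ := by
      intro h hh
      rw [Submodule.mem_orthogonal]
      intro u hu
      obtain ⟨cu, hcu⟩ := hvspan ⟨u, hu⟩
      have : u = cu • (v : E) := by
        have := congrArg (Subtype.val) hcu
        simpa using this.symm
      rw [this, real_inner_smul_left, hh, mul_zero]
    set α : ℝ := ⟪(g : E), (v : E)⟫ with hα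
    set β : ℝ := -⟪(f : E), (v : E)⟫ with hβ
    by_cases hzero : α = 0 ∧ β = 0
    · refine ⟨f, hf, hmem _ ?_, hfe⟩
      have : ⟪(f : E), (v : E)⟫ = 0 := by
        have := hzero.2; rw [hβ] at this; linarith
      rw [real_inner_comm]; exact this
    · set h₀ : D := α • f + β • g with hh₀
      have hh₀E : (h₀ : E) = α • (f : E) + β • (g : E) := by simp [hh₀]
      have hh₀0 : (h₀ : E) ≠ 0 := by
        intro hz
        rw [hh₀E] at hz
        exact hzero (hindep _ _ hz)
      have hn0 : ‖(h₀ : E)‖ ≠ 0 := norm_ne_zero_iff.mpr hh₀0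
      refine ⟨‖(h₀ : E)‖⁻¹ • h₀, ?_, ?_, ?_⟩
      · simp [norm_smul, abs_of_nonneg (norm_nonneg _), inv_mul_cancel₀ hn0]
      · apply hmem
        have hinner : ⟪(v : E), (h₀ : E)⟫ = 0 := by
          rw [hh₀E, inner_add_right, real_inner_smul_right, real_inner_smul_right]
          rw [real_inner_comm ((f:E)) ((v:E)), real_inner_comm ((g:E)) ((v:E))]
          simp only [hα, hβ]
          ring
        have : ((‖(h₀ : E)‖⁻¹ • h₀ : D) : E) = ‖(h₀ : E)‖⁻¹ • (h₀ : E) := rfl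
        rw [this, real_inner_smul_right, hinner, mul_zero]
      · have hMh₀ : M h₀ = μ • (h₀ : E) := by
          rw [hh₀, map_add, map_smul, map_smul, hfe, hge, hh₀E]
          simp [smul_add, smul_smul, mul_comm]
        rw [map_smul, hMh₀]
        simp [smul_smul, mul_comm]
  -- now: secondSpectrum ≤ μ, contradiction
  have hle : secondSpectrum D M ≤ μ := by
    apply csSup_le
    · exact ⟨_, Submodule.span ℝ {(f : E)}, finrank_span_singleton hf0, rfl⟩
    · rintro y ⟨V, hV, rfl⟩
      obtain ⟨h, hh1, hh2, hh3⟩ := key V hV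
      have hμmem : μ ∈ {x : ℝ | ∃ f : D, ‖(f : E)‖ = 1 ∧ (f : E) ∈ Vᗮ ∧
          x = ⟪(f : E), M f⟫} := by
        refine ⟨h, hh1, hh2, ?_⟩
        rw [hh3, real_inner_smul_right, real_inner_self_eq_norm_sq, hh1]
        ring
      apply csInf_le _ hμmem
      refine ⟨c, ?_⟩
      rintro x ⟨p, hp1, _, rfl⟩
      exact hc p hp1
  exact absurd hμ (not_lt.mpr hle)
end

section
/- Setting Δ := φ̂ − φ and Ψ(f; H) := ⟨f, Hf⟩ + 2⟨f, Hφ⟩, one has ν · (1 − ⟨φ̂, φ⟩²) ≤ |Ψ(Δ; H)|. -/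
open RealInnerProductSpace

/-- Auxiliary estimate for the main perturbation bound: with `Δ := φ̂ − φ`,
`Ψ(f; H) := ⟨f, Hf⟩ + 2⟨f, Hφ⟩` and `ν := λ₁ − λ₀`, one has
`ν · (1 − ⟨φ̂, φ⟩²) ≤ |Ψ(Δ; H)|`. -/
theorem gap_mul_one_sub_inner_sq_le_abs_Psi
    {E : Type*} [NormedAddCommGroup E] [InnerProductSpace ℝ E] [CompleteSpace E]
    (D : Submodule ℝ E) (hD : Dense (D : Set E))
    (L : D →ₗ[ℝ] E)
    (hsym : ∀ f g : D, ⟪L f, (g : E)⟫ = ⟪(f : E), L g⟫)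
    (lam0 lam1 : ℝ) (φ : D) (hφ : ‖(φ : E)‖ = 1)
    (hLφ : L φ = lam0 • (φ : E))
    (hlam1 : ∀ f : D, ‖(f : E)‖ = 1 → ⟪(f : E), (φ : E)⟫ = 0 → lam1 ≤ ⟪(f : E), L f⟫)
    (hgap : 0 < lam1 - lam0)
    (H : E →L[ℝ] E) (hH : ∀ x y : E, ⟪H x, y⟫ = ⟪x, H y⟫)
    (hHsmall : ‖H‖ < (lam1 - lam0) / 2)
    (lam0h : ℝ) (φh : D) (hφh : ‖(φh : E)‖ = 1)
    (heig : L φh + H (φh : E) = lam0h • (φh : E))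
    (hmin : ∀ f : D, ‖(f : E)‖ = 1 → lam0h ≤ ⟪(f : E), L f + H (f : E)⟫)
    (hsign : 0 ≤ ⟪(φ : E), (φh : E)⟫) :
    (lam1 - lam0) * (1 - ⟪(φh : E), (φ : E)⟫ ^ 2) ≤
      |⟪(φh : E) - (φ : E), H ((φh : E) - (φ : E))⟫
        + 2 * ⟪(φh : E) - (φ : E), H (φ : E)⟫| := by
  set t : ℝ := ⟪(φh : E), (φ : E)⟫ with ht
  set u : D := φh - t • φ with hu
  have huE : (u : E) = (φh : E) - t • (φ : E) := rfl
  have hφφ : ⟪(φ : E), (φ : E)⟫ = 1 := by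
    rw [real_inner_self_eq_norm_sq, hφ]; norm_num
  have hhh : ⟪(φh : E), (φh : E)⟫ = 1 := by
    rw [real_inner_self_eq_norm_sq, hφh]; norm_num
  have hcomm : ⟪(φ : E), (φh : E)⟫ = t := real_inner_comm _ _
  have huφ : ⟪(u : E), (φ : E)⟫ = 0 := by
    rw [huE, inner_sub_left, inner_smul_left]
    simp [hφφ, ← ht, hφ]
  have hφu : ⟪(φ : E), (u : E)⟫ = 0 := by rw [real_inner_comm]; exact huφ
  have huu : ⟪(u : E), (u : E)⟫ = 1 - t ^ 2 := by
    rw [huE, inner_sub_left, inner_sub_right, inner_sub_right, inner_smul_left,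
      inner_smul_left, inner_smul_right, inner_smul_right]
    rw [hφφ, hhh, hcomm, ← ht]
    ring
  -- lower bound on ⟪u, L u⟫
  have hLub : lam1 * (1 - t ^ 2) ≤ ⟪(u : E), L u⟫ := by
    rcases eq_or_ne u 0 with h0 | h0
    · have h1 : (1 : ℝ) - t ^ 2 = 0 := by
        rw [← huu, h0]; simp
      rw [h1, h0]; simp
    · set c : ℝ := ‖(u : E)‖ with hc
      have hc0 : c ≠ 0 := by
        simp only [hc, ne_eq, norm_eq_zero]
        exact fun h => h0 (Subtype.coe_injective h)
      have hcpos : 0 < c := lt_of_le_of_ne (norm_nonneg _) (Ne.symm hc0)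
      have hnorm : ‖((c⁻¹ • u : D) : E)‖ = 1 := by
        push_cast
        rw [norm_smul]
        field_simp [abs_of_pos hcpos]
        rw [norm_div, norm_one, Real.norm_eq_abs, abs_of_pos hcpos, ← hc, one_div, inv_mul_cancel₀ hc0]
      have hperp : ⟪((c⁻¹ • u : D) : E), (φ : E)⟫ = 0 := by
        push_cast
        rw [inner_smul_left]
        simp [huφ]
      have h1 := hlam1 (c⁻¹ • u) hnorm hperp
      have h2 : ⟪((c⁻¹ • u : D) : E), L (c⁻¹ • u)⟫ = c⁻¹ * c⁻¹ * ⟪(u : E), L u⟫ := by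
        rw [map_smul]
        push_cast
        rw [real_inner_smul_left, real_inner_smul_right]
        ring
      rw [h2] at h1
      have hcsq : c * c = 1 - t ^ 2 := by
        rw [hc, ← real_inner_self_eq_norm_mul_norm]
        exact huu
      have := mul_le_mul_of_nonneg_left h1 (le_of_lt (mul_pos hcpos hcpos))
      calc lam1 * (1 - t ^ 2) = c * c * lam1 := by rw [hcsq]; ring
        _ ≤ c * c * (c⁻¹ * c⁻¹ * ⟪(u : E), L u⟫) := this
        _ = ⟪(u : E), L u⟫ := by field_simp
  -- decomposition of φh
  have hφhD : φh = t • φ + u := by rw [hu]; abel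
  have hφhE : (φh : E) = t • (φ : E) + (u : E) := by rw [huE]; abel
  have hLφh : (L φh : E) = (t * lam0) • (φ : E) + L u := by
    rw [hφhD, map_add, map_smul, hLφ, smul_smul]
  have hφLu : ⟪(φ : E), L u⟫ = 0 := by
    rw [← hsym φ u, hLφ, inner_smul_left]
    simp [hφu]
  have hinnerLφh : ⟪(φh : E), L φh⟫ = t ^ 2 * lam0 + ⟪(u : E), L u⟫ := by
    rw [hLφh, hφhE]
    simp only [inner_add_left, inner_add_right, real_inner_smul_left, real_inner_smul_right]
    rw [hφLu, huφ, hφφ]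
    ring
  -- eigenvalue identity
  have heigval : ⟪(φh : E), L φh⟫ + ⟪(φh : E), H (φh : E)⟫ = lam0h := by
    have := congrArg (fun v => ⟪(φh : E), v⟫) heig
    simpa [inner_add_right, inner_smul_right, hhh, hφh] using this
  -- upper bound from minimality
  have hub : lam0h ≤ lam0 + ⟪(φ : E), H (φ : E)⟫ := by
    have := hmin φ hφ
    rwa [inner_add_right, hLφ, inner_smul_right, hφφ, mul_one] at this
  -- key inequality
  have hkey : (lam1 - lam0) * (1 - t ^ 2) ≤
      ⟪(φ : E), H (φ : E)⟫ - ⟪(φh : E), H (φh : E)⟫ := by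
    have h3 : t ^ 2 * lam0 + lam1 * (1 - t ^ 2) + ⟪(φh : E), H (φh : E)⟫ ≤
        lam0 + ⟪(φ : E), H (φ : E)⟫ := by
      calc t ^ 2 * lam0 + lam1 * (1 - t ^ 2) + ⟪(φh : E), H (φh : E)⟫
          ≤ ⟪(φh : E), L φh⟫ + ⟪(φh : E), H (φh : E)⟫ := by
            rw [hinnerLφh]; linarith
        _ = lam0h := heigval
        _ ≤ lam0 + ⟪(φ : E), H (φ : E)⟫ := hub
    nlinarith [sq_nonneg t]
  -- Psi expansion
  have hΨ : ⟪(φh : E) - (φ : E), H ((φh : E) - (φ : E))⟫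
        + 2 * ⟪(φh : E) - (φ : E), H (φ : E)⟫
      = ⟪(φh : E), H (φh : E)⟫ - ⟪(φ : E), H (φ : E)⟫ := by
    have hsymHh : ⟪(φ : E), H (φh : E)⟫ = ⟪(φh : E), H (φ : E)⟫ := by
      rw [← hH, real_inner_comm]
    simp only [map_sub, inner_sub_left, inner_sub_right]
    rw [hsymHh]
    ring
  rw [hΨ]
  calc (lam1 - lam0) * (1 - t ^ 2)
      ≤ -(⟪(φh : E), H (φh : E)⟫ - ⟪(φ : E), H (φ : E)⟫) := by linarith
    _ ≤ |⟪(φh : E), H (φh : E)⟫ - ⟪(φ : E), H (φ : E)⟫| := neg_le_abs _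
end

section
/- One has ‖φ − φ̂‖ ≤ 2‖Hφ − ⟨Hφ, φ⟩φ‖ / (ν − 2‖H‖) ≤ 2‖Hφ‖ / (ν − 2‖H‖); that is, the distance between the unperturbed and perturbed minimal eigenfunctions is controlled by the perturbation applied to the unperturbed eigenfunction, divided by the (reduced) spectral gap. -/
open RealInnerProductSpace

set_option maxHeartbeats 1000000 in
/-- Main perturbation estimate for the minimal eigenfunction: with `ν := λ₁ − λ₀`,
`‖φ − φ̂‖ ≤ 2‖Hφ − ⟨Hφ, φ⟩φ‖ / (ν − 2‖H‖) ≤ 2‖Hφ‖ / (ν − 2‖H‖)`. -/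
theorem norm_eigenfunction_sub_le_perturbation
    {E : Type*} [NormedAddCommGroup E] [InnerProductSpace ℝ E] [CompleteSpace E]
    (D : Submodule ℝ E) (hD : Dense (D : Set E))
    (L : D →ₗ[ℝ] E)
    (hsym : ∀ f g : D, ⟪L f, (g : E)⟫ = ⟪(f : E), L g⟫)
    (lam0 lam1 : ℝ) (φ : D) (hφ : ‖(φ : E)‖ = 1)
    (hLφ : L φ = lam0 • (φ : E))
    (hlam1 : ∀ f : D, ‖(f : E)‖ = 1 → ⟪(f : E), (φ : E)⟫ = 0 → lam1 ≤ ⟪(f : E), L f⟫)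
    (hgap : 0 < lam1 - lam0)
    (H : E →L[ℝ] E) (hH : ∀ x y : E, ⟪H x, y⟫ = ⟪x, H y⟫)
    (hHsmall : ‖H‖ < (lam1 - lam0) / 2)
    (lam0h : ℝ) (φh : D) (hφh : ‖(φh : E)‖ = 1)
    (heig : L φh + H (φh : E) = lam0h • (φh : E))
    (hmin : ∀ f : D, ‖(f : E)‖ = 1 → lam0h ≤ ⟪(f : E), L f + H (f : E)⟫)
    (hsign : 0 ≤ ⟪(φ : E), (φh : E)⟫) :
    ‖(φ : E) - (φh : E)‖ ≤
        2 * ‖H (φ : E) - ⟪H (φ : E), (φ : E)⟫ • (φ : E)‖ / ((lam1 - lam0) - 2 * ‖H‖) ∧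
    2 * ‖H (φ : E) - ⟪H (φ : E), (φ : E)⟫ • (φ : E)‖ / ((lam1 - lam0) - 2 * ‖H‖) ≤
        2 * ‖H (φ : E)‖ / ((lam1 - lam0) - 2 * ‖H‖) := by
  have hden : 0 < (lam1 - lam0) - 2 * ‖H‖ := by linarith
  have hφsq : ⟪(φ : E), (φ : E)⟫ = 1 := by
    rw [real_inner_self_eq_norm_sq, hφ]; norm_num
  have hφhsq : ⟪(φh : E), (φh : E)⟫ = 1 := by
    rw [real_inner_self_eq_norm_sq, hφh]; norm_num
  obtain ⟨c, hc⟩ : ∃ c, ⟪(φ : E), (φh : E)⟫ = c := ⟨_, rfl⟩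
  rw [hc] at hsign
  obtain ⟨P, hP⟩ : ∃ P, H (φ : E) - ⟪H (φ : E), (φ : E)⟫ • (φ : E) = P := ⟨_, rfl⟩
  rw [hP]
  have hc1 : c ≤ 1 := by
    have := real_inner_le_norm (φ : E) (φh : E)
    rw [hφ, hφh, hc] at this; linarith
  obtain ⟨w, hwE, hφhD⟩ : ∃ w : D, ((w : D) : E) = (φh : E) - c • (φ : E) ∧
      φh = w + c • φ := ⟨φh - c • φ, by simp, by abel⟩
  obtain ⟨s, hs, hsnn⟩ : ∃ s, ‖((w : D) : E)‖ = s ∧ 0 ≤ s := ⟨_, rfl, norm_nonneg _⟩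
  have hwφ : ⟪((w : D) : E), (φ : E)⟫ = 0 := by
    have hc' : ⟪(φh : E), (φ : E)⟫ = c := by rw [real_inner_comm]; exact hc
    rw [hwE, inner_sub_left, real_inner_smul_left, hφsq, hc']
    ring
  have hwφh : ⟪((w : D) : E), (φh : E)⟫ = 1 - c ^ 2 := by
    rw [hwE, inner_sub_left, real_inner_smul_left, hφhsq, hc]
    ring
  have hs2 : s ^ 2 = 1 - c ^ 2 := by
    rw [← hs, ← real_inner_self_eq_norm_sq]
    nth_rewrite 2 [hwE]
    rw [inner_sub_right, hwφh, real_inner_smul_right, hwφ]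
    ring
  have hHφnorm : ‖H (φ : E)‖ ≤ ‖H‖ := by
    have := H.le_opNorm (φ : E); rw [hφ] at this; linarith
  have hφHφ : ⟪(φ : E), H (φ : E)⟫ ≤ ‖H‖ := by
    have h1 := real_inner_le_norm (φ : E) (H (φ : E))
    rw [hφ, one_mul] at h1; linarith
  have hl0h : lam0h ≤ lam0 + ‖H‖ := by
    have h := hmin φ hφ
    rw [inner_add_right, hLφ, real_inner_smul_right, hφsq] at h
    linarith
  have hφhE : (φh : E) = ((w : D) : E) + c • (φ : E) := by rw [hwE]; abel
  have hLpart : ⟪((w : D) : E), L φh⟫ = ⟪((w : D) : E), L w⟫ := by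
    nth_rewrite 1 [hφhD]
    rw [map_add, map_smul, inner_add_right, real_inner_smul_right, hLφ,
      real_inner_smul_right, hwφ]
    ring
  have hHpart : ⟪((w : D) : E), H (φh : E)⟫ =
      ⟪((w : D) : E), H ((w : D) : E)⟫ + c * ⟪((w : D) : E), H (φ : E)⟫ := by
    nth_rewrite 1 [hφhE]
    rw [map_add, map_smul, inner_add_right, real_inner_smul_right]
  have key : ⟪((w : D) : E), L w⟫ + ⟪((w : D) : E), H ((w : D) : E)⟫
      + c * ⟪((w : D) : E), H (φ : E)⟫ = lam0h * (1 - c ^ 2) := by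
    have h := congrArg (fun y => ⟪((w : D) : E), y⟫) heig
    simp only [inner_add_right] at h
    rw [hLpart, hHpart, real_inner_smul_right, hwφh] at h
    linarith
  have hwHw : |⟪((w : D) : E), H ((w : D) : E)⟫| ≤ ‖H‖ * s ^ 2 := by
    have h1 := abs_real_inner_le_norm ((w : D) : E) (H ((w : D) : E))
    have h2 := H.le_opNorm ((w : D) : E)
    rw [hs] at h1 h2
    calc |⟪((w : D) : E), H ((w : D) : E)⟫| ≤ s * ‖H ((w : D) : E)‖ := h1
      _ ≤ s * (‖H‖ * s) := mul_le_mul_of_nonneg_left h2 hsnn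
      _ = ‖H‖ * s ^ 2 := by ring
  have hwHφ : |⟪((w : D) : E), H (φ : E)⟫| ≤ s * ‖P‖ := by
    have heq : ⟪((w : D) : E), H (φ : E)⟫ = ⟪((w : D) : E), P⟫ := by
      rw [← hP, inner_sub_right, real_inner_smul_right, hwφ]
      ring
    rw [heq, ← hs]
    exact abs_real_inner_le_norm _ _
  have hkey : s * ((lam1 - lam0) - 2 * ‖H‖) ≤ ‖P‖ := by
    rcases eq_or_lt_of_le hsnn with h0 | hs0
    · rw [← h0, zero_mul]; exact norm_nonneg _
    · have hψE : (((s⁻¹ • w : D) : D) : E) = (s⁻¹ : ℝ) • ((w : D) : E) := by simp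
      have hψnorm : ‖(((s⁻¹ • w : D) : D) : E)‖ = 1 := by
        rw [hψE, norm_smul, Real.norm_eq_abs, abs_inv, abs_of_pos hs0, hs]
        field_simp
      have hψφ : ⟪(((s⁻¹ • w : D) : D) : E), (φ : E)⟫ = 0 := by
        rw [hψE, real_inner_smul_left, hwφ, mul_zero]
      have h1 := hlam1 (s⁻¹ • w) hψnorm hψφ
      have hψLψ : ⟪(((s⁻¹ • w : D) : D) : E), L (s⁻¹ • w)⟫
          = s⁻¹ * s⁻¹ * ⟪((w : D) : E), L w⟫ := by
        rw [map_smul, hψE, real_inner_smul_left, real_inner_smul_right]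
        ring
      rw [hψLψ] at h1
      have hs2pos : 0 < s ^ 2 := by positivity
      have hwLw : lam1 * s ^ 2 ≤ ⟪((w : D) : E), L w⟫ := by
        have h5 := mul_le_mul_of_nonneg_left h1 hs2pos.le
        have h6 : s ^ 2 * (s⁻¹ * s⁻¹ * ⟪((w : D) : E), L w⟫)
            = ⟪((w : D) : E), L w⟫ := by
          field_simp
        rw [h6] at h5; linarith
      have hb1 : -⟪((w : D) : E), H ((w : D) : E)⟫ ≤ ‖H‖ * s ^ 2 := by
        have := neg_abs_le ⟪((w : D) : E), H ((w : D) : E)⟫; linarith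
      have hb2 : -(c * ⟪((w : D) : E), H (φ : E)⟫) ≤ s * ‖P‖ := by
        have h3 : |c * ⟪((w : D) : E), H (φ : E)⟫| ≤ s * ‖P‖ := by
          rw [abs_mul, abs_of_nonneg hsign]
          calc c * |⟪((w : D) : E), H (φ : E)⟫| ≤ 1 * (s * ‖P‖) :=
              mul_le_mul hc1 hwHφ (abs_nonneg _) (by norm_num)
            _ = s * ‖P‖ := by ring
        have := neg_abs_le (c * ⟪((w : D) : E), H (φ : E)⟫); linarith
      have h2 : lam1 * s ^ 2 ≤ lam0h * (1 - c ^ 2) + ‖H‖ * s ^ 2 + s * ‖P‖ := by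
        linarith [hwLw, key]
      have h4 : s ^ 2 * ((lam1 - lam0) - 2 * ‖H‖) ≤ s * ‖P‖ := by
        have hl : lam0h * (1 - c ^ 2) ≤ (lam0 + ‖H‖) * s ^ 2 := by
          rw [hs2]
          nlinarith [hl0h, hs2 ▸ hs2pos.le]
        nlinarith [h2]
      nlinarith [h4, hs0, norm_nonneg P]
  constructor
  · have hnd : ‖(φ : E) - (φh : E)‖ ^ 2 = 2 - 2 * c := by
      rw [norm_sub_sq_real, hφ, hφh, hc]; ring
    have hsB : s ≤ ‖P‖ / ((lam1 - lam0) - 2 * ‖H‖) := by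
      rw [le_div_iff₀ hden]; exact hkey
    have hBnn : 0 ≤ ‖P‖ / ((lam1 - lam0) - 2 * ‖H‖) := hsnn.trans hsB
    have hsq : ‖(φ : E) - (φh : E)‖ ^ 2
        ≤ (2 * (‖P‖ / ((lam1 - lam0) - 2 * ‖H‖))) ^ 2 := by
      nlinarith [hs2, hsign, hc1, hsB, hsnn, hnd]
    have h2B : 2 * ‖P‖ / ((lam1 - lam0) - 2 * ‖H‖)
        = 2 * (‖P‖ / ((lam1 - lam0) - 2 * ‖H‖)) := by ring
    rw [h2B]
    calc ‖(φ : E) - (φh : E)‖ = Real.sqrt (‖(φ : E) - (φh : E)‖ ^ 2) :=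
          (Real.sqrt_sq (norm_nonneg _)).symm
      _ ≤ Real.sqrt ((2 * (‖P‖ / ((lam1 - lam0) - 2 * ‖H‖))) ^ 2) :=
          Real.sqrt_le_sqrt hsq
      _ = 2 * (‖P‖ / ((lam1 - lam0) - 2 * ‖H‖)) := Real.sqrt_sq (by positivity)
  · have hPle : ‖P‖ ≤ ‖H (φ : E)‖ := by
      have h := norm_sub_sq_real (H (φ : E)) (⟪H (φ : E), (φ : E)⟫ • (φ : E))
      rw [hP, real_inner_smul_right, norm_smul, hφ, mul_one, Real.norm_eq_abs,
        sq_abs] at h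
      nlinarith [norm_nonneg P, norm_nonneg (H (φ : E))]
    gcongr
end

section
/- Assume additionally that ⟨f, (L+H)f⟩ ≥ λ₁ − ‖H‖ for every f ∈ D with ‖f‖ = 1 and ⟨f, φ̂⟩ = 0 (this holds automatically when L+H is self-adjoint with λ̂₀ a simple eigenvalue at the bottom of its spectrum). Then ‖φ − φ̂‖ ≤ 2√2 · ‖Hφ‖ / ν (a Davis–Kahan type bound). -/
open RealInnerProductSpace

set_option maxHeartbeats 1000000 in
/-- Davis–Kahan type bound: under the additional hypothesis that
`⟨f, (L+H)f⟩ ≥ λ₁ − ‖H‖` for every unit `f ∈ D` orthogonal to `φ̂`, one has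
`‖φ − φ̂‖ ≤ 2√2 · ‖Hφ‖ / ν` with `ν := λ₁ − λ₀`. -/
theorem norm_eigenfunction_sub_le_davis_kahan
    {E : Type*} [NormedAddCommGroup E] [InnerProductSpace ℝ E] [CompleteSpace E]
    (D : Submodule ℝ E) (hD : Dense (D : Set E))
    (L : D →ₗ[ℝ] E)
    (hsym : ∀ f g : D, ⟪L f, (g : E)⟫ = ⟪(f : E), L g⟫)
    (lam0 lam1 : ℝ) (φ : D) (hφ : ‖(φ : E)‖ = 1)
    (hLφ : L φ = lam0 • (φ : E))
    (hlam1 : ∀ f : D, ‖(f : E)‖ = 1 → ⟪(f : E), (φ : E)⟫ = 0 → lam1 ≤ ⟪(f : E), L f⟫)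
    (hgap : 0 < lam1 - lam0)
    (H : E →L[ℝ] E) (hH : ∀ x y : E, ⟪H x, y⟫ = ⟪x, H y⟫)
    (hHsmall : ‖H‖ < (lam1 - lam0) / 2)
    (lam0h : ℝ) (φh : D) (hφh : ‖(φh : E)‖ = 1)
    (heig : L φh + H (φh : E) = lam0h • (φh : E))
    (hmin : ∀ f : D, ‖(f : E)‖ = 1 → lam0h ≤ ⟪(f : E), L f + H (f : E)⟫)
    (hsign : 0 ≤ ⟪(φ : E), (φh : E)⟫)
    (hgap2 : ∀ f : D, ‖(f : E)‖ = 1 → ⟪(f : E), (φh : E)⟫ = 0 →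
      lam1 - ‖H‖ ≤ ⟪(f : E), L f + H (f : E)⟫) :
    ‖(φ : E) - (φh : E)‖ ≤ 2 * Real.sqrt 2 * ‖H (φ : E)‖ / (lam1 - lam0) := by
  set c := ⟪(φ : E), (φh : E)⟫ with hc
  set w : D := φ - c • φh with hw
  have hwE : (w : E) = (φ : E) - c • (φh : E) := by
    simp [hw]
  have hφsq : ⟪(φ : E), (φ : E)⟫ = 1 := by
    rw [real_inner_self_eq_norm_sq, hφ]; norm_num
  have hφhsq : ⟪(φh : E), (φh : E)⟫ = 1 := by
    rw [real_inner_self_eq_norm_sq, hφh]; norm_num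
  have horth : ⟪(w : E), (φh : E)⟫ = 0 := by
    rw [hwE, inner_sub_left, real_inner_smul_left, hφhsq]; ring
  have hwsq : ‖(w : E)‖ ^ 2 = 1 - c ^ 2 := by
    have hcomm : ⟪(φh : E), (φ : E)⟫ = c := (real_inner_comm _ _).trans hc.symm
    rw [← real_inner_self_eq_norm_sq, hwE, inner_sub_left, inner_sub_right, inner_sub_right,
      real_inner_smul_left, real_inner_smul_left, real_inner_smul_right, real_inner_smul_right,
      hφsq, hφhsq, hcomm]
    ring
  have hwφ : ⟪(w : E), (φ : E)⟫ = ‖(w : E)‖ ^ 2 := by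
    have hcomm : ⟪(φh : E), (φ : E)⟫ = c := (real_inner_comm _ _).trans hc.symm
    rw [hwsq, hwE, inner_sub_left, real_inner_smul_left, hφsq, hcomm]
    ring
  have hform : ⟪(w : E), L w + H (w : E)⟫ = lam0 * ‖(w : E)‖ ^ 2 + ⟪(w : E), H (φ : E)⟫ := by
    have hcomb : L w + H (w : E) = lam0 • (φ : E) + H (φ : E) - c • (lam0h • (φh : E)) := by
      rw [hw, map_sub, map_smul, hLφ, ← heig]
      have : ((φ - c • φh : D) : E) = (φ : E) - c • (φh : E) := by simp
      rw [this, map_sub, map_smul]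
      module
    rw [hcomb, inner_sub_right, inner_add_right, real_inner_smul_right, real_inner_smul_right,
      real_inner_smul_right, horth, hwφ]
    ring
  have hkey : (lam1 - ‖H‖) * ‖(w : E)‖ ^ 2 ≤ lam0 * ‖(w : E)‖ ^ 2 + ⟪(w : E), H (φ : E)⟫ := by
    by_cases hw0 : (w : E) = 0
    · simp [hw0]
    · have hnw : 0 < ‖(w : E)‖ := norm_pos_iff.mpr hw0
      set t : ℝ := ‖(w : E)‖⁻¹ with ht
      have htpos : 0 < t := inv_pos.mpr hnw
      set u : D := t • w with hu
      have huE : (u : E) = t • (w : E) := by simp [hu]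
      have hun : ‖(u : E)‖ = 1 := by
        rw [huE, norm_smul, Real.norm_eq_abs, abs_of_pos htpos, ht]
        field_simp
      have huorth : ⟪(u : E), (φh : E)⟫ = 0 := by
        rw [huE, real_inner_smul_left, horth]; ring
      have h2 := hgap2 u hun huorth
      have hq : ⟪(u : E), L u + H (u : E)⟫ = t * (t * ⟪(w : E), L w + H (w : E)⟫) := by
        rw [hu, map_smul, huE, map_smul, ← smul_add, real_inner_smul_left,
          real_inner_smul_right]
      rw [hq, hform] at h2
      have hts : t * ‖(w : E)‖ = 1 := by rw [ht]; field_simp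
      have := mul_le_mul_of_nonneg_right h2 (sq_nonneg ‖(w : E)‖)
      calc (lam1 - ‖H‖) * ‖(w : E)‖ ^ 2
          ≤ t * (t * (lam0 * ‖(w : E)‖ ^ 2 + ⟪(w : E), H (φ : E)⟫)) * ‖(w : E)‖ ^ 2 := this
        _ = (t * ‖(w : E)‖) * (t * ‖(w : E)‖) *
              (lam0 * ‖(w : E)‖ ^ 2 + ⟪(w : E), H (φ : E)⟫) := by ring
        _ = lam0 * ‖(w : E)‖ ^ 2 + ⟪(w : E), H (φ : E)⟫ := by rw [hts]; ring
  have hCS : ⟪(w : E), H (φ : E)⟫ ≤ ‖(w : E)‖ * ‖H (φ : E)‖ := real_inner_le_norm _ _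
  have hwle : ‖(w : E)‖ ≤ 2 * ‖H (φ : E)‖ / (lam1 - lam0) := by
    rcases (norm_nonneg ((w : E))).eq_or_lt with h0 | h0
    · rw [← h0]; positivity
    · rw [le_div_iff₀ hgap]
      nlinarith [hkey, hCS, mul_lt_mul_of_pos_right hHsmall (mul_pos h0 h0)]
  have hc1 : c ≤ 1 := by
    have := real_inner_le_norm (φ : E) (φh : E)
    rw [hφ, hφh] at this
    simpa [hc] using this
  have hdsq : ‖(φ : E) - (φh : E)‖ ^ 2 = 2 - 2 * c := by
    rw [@norm_sub_sq_real, hφ, hφh, ← hc]; ring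
  have hRnn : 0 ≤ 2 * Real.sqrt 2 * ‖H (φ : E)‖ / (lam1 - lam0) := by positivity
  have hs2 : Real.sqrt 2 ^ 2 = 2 := Real.sq_sqrt (by norm_num)
  refine le_of_pow_le_pow_left₀ two_ne_zero hRnn ?_
  have h8 : (2 * Real.sqrt 2 * ‖H (φ : E)‖ / (lam1 - lam0)) ^ 2
      = 2 * (2 * ‖H (φ : E)‖ / (lam1 - lam0)) ^ 2 := by
    rw [div_pow, div_pow, mul_pow, mul_pow, mul_pow, hs2]; ring
  rw [hdsq, h8]
  have hsq : ‖(w : E)‖ ^ 2 ≤ (2 * ‖H (φ : E)‖ / (lam1 - lam0)) ^ 2 :=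
    pow_le_pow_left₀ (norm_nonneg _) hwle 2
  nlinarith [hsq, hwsq, mul_nonneg hsign (sub_nonneg.mpr hc1)]
end

section
/- One has ‖φ − (Z/Z̃)·φ̃‖₂ ≤ Z·ε, and the normalizing constants satisfy |Z − Z̃| ≤ C·ε, where C := Z²Λ/(1 − ΛZε). -/
open MeasureTheory
open scoped ENNReal NNReal

/-- If the L²(Γ)-normalized ratios `ϕ = φ/Z`, `ϕ̃ = φ̃/Z̃` satisfy `‖ϕ − ϕ̃‖₂ ≤ ε` with
`0 < ε < 1/(ΛZ)`, then `‖φ − (Z/Z̃)φ̃‖₂ ≤ Zε` and `|Z − Z̃| ≤ Cε`, `C = Z²Λ/(1 − ΛZε)`. -/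
theorem norm_phi_sub_scaled_le_and_abs_normConst_sub_le (d : ℕ) (hd : 1 ≤ d)
    (γ : (Fin d → ℝ) → ℝ) (hγm : Measurable γ) (hγpos : ∀ x, 0 < γ x)
    (Γ : Measure (Fin d → ℝ))
    (hΓ : Γ = volume.withDensity fun x => ENNReal.ofReal (γ x))
    (hfin : Γ Set.univ < ⊤)
    (π πt : (Fin d → ℝ) → ℝ) (hπm : Measurable π) (hπtm : Measurable πt)
    (hπ0 : ∀ x, 0 ≤ π x) (hπt0 : ∀ x, 0 ≤ πt x)
    (hπ1 : ∫ x, π x = 1) (hπt1 : ∫ x, πt x = 1)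
    (hφ2 : Integrable (fun x => (π x / γ x) ^ 2) Γ)
    (hφt2 : Integrable (fun x => (πt x / γ x) ^ 2) Γ)
    (Λ Z Zt : ℝ)
    (hΛ : Λ = Real.sqrt (Γ Set.univ).toReal)
    (hZ : Z = Real.sqrt (∫ x, (π x / γ x) ^ 2 ∂Γ))
    (hZt : Zt = Real.sqrt (∫ x, (πt x / γ x) ^ 2 ∂Γ))
    (hZpos : 0 < Z) (hZtpos : 0 < Zt)
    (ε : ℝ) (hεpos : 0 < ε) (hεsmall : ε < 1 / (Λ * Z))
    (hε : Real.sqrt (∫ x, (π x / γ x / Z - πt x / γ x / Zt) ^ 2 ∂Γ) ≤ ε) :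
    Real.sqrt (∫ x, (π x / γ x - (Z / Zt) * (πt x / γ x)) ^ 2 ∂Γ) ≤ Z * ε ∧
    |Z - Zt| ≤ (Z ^ 2 * Λ / (1 - Λ * Z * ε)) * ε := by
  haveI : IsFiniteMeasure Γ := ⟨hfin⟩
  set h : (Fin d → ℝ) → ℝ := fun x => π x / γ x / Z - πt x / γ x / Zt with hh
  have hZne : Z ≠ 0 := ne_of_gt hZpos
  have hZtne : Zt ≠ 0 := ne_of_gt hZtpos
  -- integral of h² is nonneg
  have hI0 : 0 ≤ ∫ x, h x ^ 2 ∂Γ := integral_nonneg fun x => sq_nonneg _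
  -- Part 1
  have part1 : Real.sqrt (∫ x, (π x / γ x - (Z / Zt) * (πt x / γ x)) ^ 2 ∂Γ) ≤ Z * ε := by
    have heq : ∀ x, (π x / γ x - (Z / Zt) * (πt x / γ x)) ^ 2 = Z ^ 2 * (h x ^ 2) := by
      intro x
      have hx : π x / γ x - Z / Zt * (πt x / γ x) = Z * h x := by
        show _ = Z * (π x / γ x / Z - πt x / γ x / Zt)
        rw [mul_sub, mul_comm Z (π x / γ x / Z), div_mul_cancel₀ _ hZne]
        ring
      rw [hx, mul_pow]
    calc Real.sqrt (∫ x, (π x / γ x - (Z / Zt) * (πt x / γ x)) ^ 2 ∂Γ)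
        = Real.sqrt (Z ^ 2 * ∫ x, h x ^ 2 ∂Γ) := by
          rw [← integral_const_mul]; exact congrArg _ (integral_congr_ae (Filter.Eventually.of_forall heq))
      _ = Z * Real.sqrt (∫ x, h x ^ 2 ∂Γ) := by
          rw [Real.sqrt_mul (sq_nonneg Z), Real.sqrt_sq hZpos.le]
      _ ≤ Z * ε := by exact mul_le_mul_of_nonneg_left hε hZpos.le
  refine ⟨part1, ?_⟩
  -- measurability / Memℒp facts
  have hφm : Measurable fun x => π x / γ x := hπm.div hγm
  have hφtm : Measurable fun x => πt x / γ x := hπtm.div hγm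
  have hφL2 : MemLp (fun x => π x / γ x) 2 Γ :=
    (memLp_two_iff_integrable_sq hφm.aestronglyMeasurable).mpr hφ2
  have hφtL2 : MemLp (fun x => πt x / γ x) 2 Γ :=
    (memLp_two_iff_integrable_sq hφtm.aestronglyMeasurable).mpr hφt2
  have hhL2 : MemLp h 2 Γ := by
    have h1 : MemLp (fun x => π x / γ x / Z) 2 Γ := by
      simpa [div_eq_mul_inv, mul_comm] using hφL2.const_mul Z⁻¹
    have h2 : MemLp (fun x => πt x / γ x / Zt) 2 Γ := by
      simpa [div_eq_mul_inv, mul_comm] using hφtL2.const_mul Zt⁻¹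
    exact h1.sub h2
  -- ∫ φ dΓ = 1 and ∫ φ̃ dΓ = 1
  have key : ∀ (p : (Fin d → ℝ) → ℝ), Measurable p → (∫ x, p x = 1) →
      ∫ x, p x / γ x ∂Γ = 1 := by
    intro p pm p1
    have hγnn : Measurable fun x => (γ x).toNNReal := hγm.real_toNNReal
    have : Γ = volume.withDensity fun x => ((γ x).toNNReal : ℝ≥0∞) := by
      rw [hΓ]; rfl
    rw [this, integral_withDensity_eq_integral_smul hγnn]
    rw [← p1]
    apply integral_congr_ae
    filter_upwards with x
    have hγx := hγpos x
    simp only [NNReal.smul_def, Real.coe_toNNReal _ hγx.le, smul_eq_mul]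
    field_simp
  have hint1 : ∫ x, π x / γ x ∂Γ = 1 := key π hπm hπ1
  have hint2 : ∫ x, πt x / γ x ∂Γ = 1 := key πt hπtm hπt1
  -- ∫ h dΓ = 1/Z - 1/Zt
  have hφint : Integrable (fun x => π x / γ x) Γ := hφL2.integrable one_le_two
  have hφtint : Integrable (fun x => πt x / γ x) Γ := hφtL2.integrable one_le_two
  have hinth : ∫ x, h x ∂Γ = 1 / Z - 1 / Zt := by
    have : ∫ x, h x ∂Γ = (∫ x, π x / γ x ∂Γ) / Z - (∫ x, πt x / γ x ∂Γ) / Zt := by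
      simp only [hh]
      rw [integral_sub (hφint.div_const Z) (hφtint.div_const Zt),
        integral_div, integral_div]
    rw [this, hint1, hint2]
  -- Cauchy–Schwarz : |∫ h| ≤ Λ * sqrt(∫ h²)
  have hCS : |1 / Z - 1 / Zt| ≤ Λ * Real.sqrt (∫ x, h x ^ 2 ∂Γ) := by
    rw [← hinth]
    have h1 : |∫ x, h x ∂Γ| ≤ ∫ x, |h x| ∂Γ := by
      simpa using norm_integral_le_integral_norm (μ := Γ) h
    have h2 : ∫ x, |h x| ∂Γ = ∫ x, (1 : ℝ) * |h x| ∂Γ := by simp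
    have hconj : Real.HolderConjugate 2 2 := by
      constructor <;> norm_num
    have hCS' := integral_mul_le_Lp_mul_Lq_of_nonneg (μ := Γ) hconj
      (f := fun _ => (1 : ℝ)) (g := fun x => |h x|)
      (Filter.Eventually.of_forall fun x => zero_le_one)
      (Filter.Eventually.of_forall fun x => abs_nonneg _)
      (by simpa using (memLp_const (1 : ℝ) (μ := Γ) (p := 2)))
      (by rw [ENNReal.ofReal_ofNat]; exact hhL2.abs)
    have hpow : ∀ x : ℝ, 0 ≤ x → x ^ (2 : ℝ) = x ^ 2 := by
      intro x hx; rw [← Real.rpow_natCast x 2]; norm_num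
    have hL : (∫ x, (1 : ℝ) ^ (2 : ℝ) ∂Γ) ^ (1 / (2:ℝ)) = Λ := by
      rw [hΛ, Real.sqrt_eq_rpow]
      congr 1
      simp
      rfl
    have hR : (∫ x, |h x| ^ (2 : ℝ) ∂Γ) ^ (1 / (2:ℝ)) = Real.sqrt (∫ x, h x ^ 2 ∂Γ) := by
      rw [Real.sqrt_eq_rpow]
      congr 1
      apply integral_congr_ae
      filter_upwards with x
      rw [hpow _ (abs_nonneg _), sq_abs]
    calc |∫ x, h x ∂Γ| ≤ ∫ x, |h x| ∂Γ := h1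
      _ = ∫ x, (1:ℝ) * |h x| ∂Γ := h2
      _ ≤ (∫ x, (1:ℝ) ^ (2:ℝ) ∂Γ) ^ (1/(2:ℝ)) * (∫ x, |h x| ^ (2:ℝ) ∂Γ) ^ (1/(2:ℝ)) := hCS'
      _ = Λ * Real.sqrt (∫ x, h x ^ 2 ∂Γ) := by rw [hL, hR]
  have hΛ0 : 0 ≤ Λ := hΛ ▸ Real.sqrt_nonneg _
  have hΛpos : 0 < Λ := by
    rcases hΛ0.lt_or_eq with hlt | heq
    · exact hlt
    · exfalso
      rw [← heq] at hεsmall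
      simp at hεsmall
      linarith
  have hCS2 : |1 / Z - 1 / Zt| ≤ Λ * ε := by
    refine hCS.trans ?_
    exact mul_le_mul_of_nonneg_left hε hΛ0
  -- arithmetic conclusion
  have hden : 0 < 1 - Λ * Z * ε := by
    have : Λ * Z * ε < 1 := by
      have h1 : 0 < Λ * Z := mul_pos hΛpos hZpos
      rw [lt_div_iff₀ h1] at hεsmall
      linarith [hεsmall]
    linarith
  have habs : |Zt - Z| ≤ Λ * ε * (Z * Zt) := by
    have : |1 / Z - 1 / Zt| = |Zt - Z| / (Z * Zt) := by
      rw [div_sub_div _ _ hZne hZtne, abs_div, abs_of_pos (mul_pos hZpos hZtpos)]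
      congr 1
      rw [one_mul, mul_one]
    rw [this, div_le_iff₀ (mul_pos hZpos hZtpos)] at hCS2
    exact hCS2
  -- bound Zt ≤ Z / (1 - ΛZε)
  have hZtle : Zt * (1 - Λ * Z * ε) ≤ Z := by
    have h1 : Zt - Z ≤ |Zt - Z| := le_abs_self _
    nlinarith [habs, hZtpos, hZpos]
  have : |Z - Zt| ≤ Λ * ε * (Z * Zt) := by rw [abs_sub_comm]; exact habs
  calc |Z - Zt| ≤ Λ * ε * (Z * Zt) := this
    _ ≤ (Z ^ 2 * Λ / (1 - Λ * Z * ε)) * ε := by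
        rw [div_mul_eq_mul_div, le_div_iff₀ hden]
        have hmul := mul_le_mul_of_nonneg_left hZtle
          (le_of_lt (by positivity : (0:ℝ) < Λ * ε * Z))
        nlinarith [hmul]
end

section
/- One has ‖φ − φ̃‖₂ ≤ ε·(Z + C), where C := Z²Λ/(1 − ΛZε). -/
open MeasureTheory
open scoped RealInnerProductSpace ENNReal NNReal

set_option maxHeartbeats 1000000

lemma norm_toLp_two {α : Type*} [MeasurableSpace α] {μ : Measure α} {h : α → ℝ}
    (hh : MemLp h 2 μ) : ‖hh.toLp h‖ = Real.sqrt (∫ x, h x ^ 2 ∂μ) := by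
  have h1 : (inner ℝ (hh.toLp h) (hh.toLp h) : ℝ) = ∫ x, h x ^ 2 ∂μ := by
    rw [L2.inner_def]
    apply integral_congr_ae
    filter_upwards [hh.coeFn_toLp] with x hx
    simp [hx, RCLike.inner_apply, sq]
  rw [real_inner_self_eq_norm_sq] at h1
  rw [← h1, Real.sqrt_sq (norm_nonneg _)]

/-- If the L²(Γ)-normalized ratios `ϕ = φ/Z`, `ϕ̃ = φ̃/Z̃` satisfy `‖ϕ − ϕ̃‖₂ ≤ ε` with
`0 < ε < 1/(ΛZ)`, then `‖φ − φ̃‖₂ ≤ ε(Z + C)` with `C = Z²Λ/(1 − ΛZε)`. -/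
theorem norm_phi_sub_le (d : ℕ) (hd : 1 ≤ d)
    (γ : (Fin d → ℝ) → ℝ) (hγm : Measurable γ) (hγpos : ∀ x, 0 < γ x)
    (Γ : Measure (Fin d → ℝ))
    (hΓ : Γ = volume.withDensity fun x => ENNReal.ofReal (γ x))
    (hfin : Γ Set.univ < ⊤)
    (π πt : (Fin d → ℝ) → ℝ) (hπm : Measurable π) (hπtm : Measurable πt)
    (hπ0 : ∀ x, 0 ≤ π x) (hπt0 : ∀ x, 0 ≤ πt x)
    (hπ1 : ∫ x, π x = 1) (hπt1 : ∫ x, πt x = 1)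
    (hφ2 : Integrable (fun x => (π x / γ x) ^ 2) Γ)
    (hφt2 : Integrable (fun x => (πt x / γ x) ^ 2) Γ)
    (Λ Z Zt : ℝ)
    (hΛ : Λ = Real.sqrt (Γ Set.univ).toReal)
    (hZ : Z = Real.sqrt (∫ x, (π x / γ x) ^ 2 ∂Γ))
    (hZt : Zt = Real.sqrt (∫ x, (πt x / γ x) ^ 2 ∂Γ))
    (hZpos : 0 < Z) (hZtpos : 0 < Zt)
    (ε : ℝ) (hεpos : 0 < ε) (hεsmall : ε < 1 / (Λ * Z))
    (hε : Real.sqrt (∫ x, (π x / γ x / Z - πt x / γ x / Zt) ^ 2 ∂Γ) ≤ ε) :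
    Real.sqrt (∫ x, (π x / γ x - πt x / γ x) ^ 2 ∂Γ) ≤
      ε * (Z + Z ^ 2 * Λ / (1 - Λ * Z * ε)) := by
  haveI : IsFiniteMeasure Γ := ⟨hfin⟩
  set f : (Fin d → ℝ) → ℝ := fun x => π x / γ x with hf_def
  set g : (Fin d → ℝ) → ℝ := fun x => πt x / γ x with hg_def
  have hfm : AEStronglyMeasurable f Γ := (hπm.div hγm).aestronglyMeasurable
  have hgm : AEStronglyMeasurable g Γ := (hπtm.div hγm).aestronglyMeasurable
  have hfL2 : MemLp f 2 Γ := (memLp_two_iff_integrable_sq hfm).2 hφ2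
  have hgL2 : MemLp g 2 Γ := (memLp_two_iff_integrable_sq hgm).2 hφt2
  set F : Lp ℝ 2 Γ := hfL2.toLp f with hF_def
  set G : Lp ℝ 2 Γ := hgL2.toLp g with hG_def
  -- norms
  have hnF : ‖F‖ = Z := by rw [hF_def, norm_toLp_two, hZ]
  have hnG : ‖G‖ = Zt := by rw [hG_def, norm_toLp_two, hZt]
  -- the normalized difference
  have hεF : ‖Z⁻¹ • F - Zt⁻¹ • G‖ ≤ ε := by
    have heq : (fun x => f x / Z - g x / Zt) = (Z⁻¹ • f - Zt⁻¹ • g) := by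
      funext x; simp [div_eq_inv_mul, Pi.smul_apply, smul_eq_mul]
    have hmem : MemLp (fun x => f x / Z - g x / Zt) 2 Γ := by
      rw [heq]; exact (hfL2.const_smul Z⁻¹).sub (hgL2.const_smul Zt⁻¹)
    have htoLp : hmem.toLp _ = Z⁻¹ • F - Zt⁻¹ • G := by
      rw [hF_def, hG_def, ← MemLp.toLp_const_smul, ← MemLp.toLp_const_smul,
        ← MemLp.toLp_sub]
      exact MemLp.toLp_congr _ _ (Filter.Eventually.of_forall (fun x => congrFun heq x))
    rw [← htoLp, norm_toLp_two]
    exact hε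
  -- constant one function
  have honemem : MemLp (fun _ : Fin d → ℝ => (1:ℝ)) 2 Γ := memLp_const 1
  set one : Lp ℝ 2 Γ := honemem.toLp _ with hone_def
  have hnone : ‖one‖ = Λ := by
    rw [hone_def, norm_toLp_two, hΛ]
    congr 1
    simp [integral_const, smul_eq_mul, Measure.real]
  -- integrals of f and g against Γ equal 1
  have hint : ∀ (π' : (Fin d → ℝ) → ℝ), Measurable π' → (∫ x, π' x = 1) →
      ∫ x, π' x / γ x ∂Γ = 1 := by
    intro π' hm h1
    rw [hΓ]
    have hden : (fun x => ENNReal.ofReal (γ x)) =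
        (fun x => ((fun y => (γ y).toNNReal) x : ℝ≥0∞)) := rfl
    rw [hden, integral_withDensity_eq_integral_smul hγm.real_toNNReal]
    rw [← h1]
    congr 1
    funext x
    have hγx := (hγpos x).ne'
    simp [NNReal.smul_def, Real.coe_toNNReal _ (hγpos x).le]
    field_simp
  have hIf : ∫ x, f x ∂Γ = 1 := hint π hπm hπ1
  have hIg : ∫ x, g x ∂Γ = 1 := hint πt hπtm hπt1
  -- inner products with one
  have hinner : ∀ (h : (Fin d → ℝ) → ℝ) (hh : MemLp h 2 Γ),
      (inner ℝ (hh.toLp h) one : ℝ) = ∫ x, h x ∂Γ := by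
    intro h hh
    rw [L2.inner_def]
    apply integral_congr_ae
    filter_upwards [hh.coeFn_toLp, honemem.coeFn_toLp] with x hx hx1
    rw [hone_def, hx1]; simp [hx, RCLike.inner_apply]
  have hinF : (inner ℝ F one : ℝ) = 1 := by rw [hF_def, hinner f hfL2, hIf]
  have hinG : (inner ℝ G one : ℝ) = 1 := by rw [hG_def, hinner g hgL2, hIg]
  -- Cauchy-Schwarz gives |1/Z - 1/Zt| ≤ ε Λ
  have hΛ0 : 0 ≤ Λ := hΛ ▸ Real.sqrt_nonneg _
  have hCS : |Z⁻¹ - Zt⁻¹| ≤ ε * Λ := by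
    have h1 : (inner ℝ (Z⁻¹ • F - Zt⁻¹ • G) one : ℝ) = Z⁻¹ - Zt⁻¹ := by
      rw [inner_sub_left, real_inner_smul_left, real_inner_smul_left, hinF, hinG]
      ring
    calc |Z⁻¹ - Zt⁻¹| = |(inner ℝ (Z⁻¹ • F - Zt⁻¹ • G) one : ℝ)| := by rw [h1]
      _ ≤ ‖Z⁻¹ • F - Zt⁻¹ • G‖ * ‖one‖ := abs_real_inner_le_norm _ _
      _ ≤ ε * Λ := by rw [hnone]; exact mul_le_mul_of_nonneg_right hεF hΛ0
  -- arithmetic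
  have hΛpos : 0 < Λ := by
    rcases hΛ0.lt_or_eq with h | h
    · exact h
    · exfalso; rw [← h] at hεsmall; simp at hεsmall; linarith
  have hden : Λ * Z * ε < 1 := by
    rw [lt_div_iff₀ (by positivity)] at hεsmall
    nlinarith
  have hdenpos : 0 < 1 - Λ * Z * ε := by linarith
  have hZtle : Zt * (1 - Λ * Z * ε) ≤ Z := by
    have h2 : Z⁻¹ - ε * Λ ≤ Zt⁻¹ := by linarith [(abs_le.1 hCS).2]
    have h3 := mul_le_mul_of_nonneg_left h2 (mul_pos hZpos hZtpos).le
    have e1 : Z * Zt * Zt⁻¹ = Z := by rw [mul_assoc, mul_inv_cancel₀ hZtpos.ne', mul_one]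
    have e2 : Z * Zt * Z⁻¹ = Zt := by
      rw [mul_comm Z Zt, mul_assoc, mul_inv_cancel₀ hZpos.ne', mul_one]
    have h4 : Z * Zt * (Z⁻¹ - ε * Λ) = Zt - Z * Zt * (ε * Λ) := by rw [mul_sub, e2]
    rw [h4, e1] at h3
    calc Zt * (1 - Λ * Z * ε) = Zt - Z * Zt * (ε * Λ) := by ring
      _ ≤ Z := h3
  have hkey : |Z - Zt| ≤ ε * (Z ^ 2 * Λ / (1 - Λ * Z * ε)) := by
    have e3 : Z * Zt * (Z⁻¹ - Zt⁻¹) = Zt - Z := by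
      rw [mul_sub]
      rw [mul_comm Z Zt, mul_assoc, mul_inv_cancel₀ hZpos.ne', mul_one,
        mul_comm Zt Z, mul_assoc, mul_inv_cancel₀ hZtpos.ne', mul_one]
    have habs : |Zt - Z| ≤ Z * Zt * (ε * Λ) := by
      calc |Zt - Z| = |Z * Zt| * |Z⁻¹ - Zt⁻¹| := by rw [← abs_mul, e3]
        _ ≤ Z * Zt * (ε * Λ) := by
            rw [abs_of_pos (mul_pos hZpos hZtpos)]
            exact mul_le_mul_of_nonneg_left hCS (mul_pos hZpos hZtpos).le
    rw [abs_sub_comm]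
    refine habs.trans ?_
    rw [show ε * (Z ^ 2 * Λ / (1 - Λ * Z * ε)) = ε * Z ^ 2 * Λ / (1 - Λ * Z * ε) from by ring,
      le_div_iff₀ hdenpos]
    calc Z * Zt * (ε * Λ) * (1 - Λ * Z * ε) = Zt * (1 - Λ * Z * ε) * (Z * ε * Λ) := by ring
      _ ≤ Z * (Z * ε * Λ) := mul_le_mul_of_nonneg_right hZtle (by positivity)
      _ = ε * Z ^ 2 * Λ := by ring
  -- final decomposition
  have hdecomp : F - G = Z • (Z⁻¹ • F - Zt⁻¹ • G) + (Z - Zt) • (Zt⁻¹ • G) := by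
    rw [smul_sub, smul_smul, smul_smul, mul_inv_cancel₀ hZpos.ne', one_smul,
      sub_smul, smul_smul, smul_smul, mul_inv_cancel₀ hZtpos.ne', one_smul]
    abel
  have hnormFG : ‖F - G‖ ≤ ε * Z + |Z - Zt| := by
    rw [hdecomp]
    calc ‖Z • (Z⁻¹ • F - Zt⁻¹ • G) + (Z - Zt) • (Zt⁻¹ • G)‖
        ≤ ‖Z • (Z⁻¹ • F - Zt⁻¹ • G)‖ + ‖(Z - Zt) • (Zt⁻¹ • G)‖ := norm_add_le _ _
      _ = |Z| * ‖Z⁻¹ • F - Zt⁻¹ • G‖ + |Z - Zt| * (|Zt⁻¹| * ‖G‖) := by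
          rw [norm_smul, norm_smul, norm_smul, Real.norm_eq_abs, Real.norm_eq_abs,
            Real.norm_eq_abs]
      _ ≤ ε * Z + |Z - Zt| := by
          rw [hnG, abs_of_pos hZpos, abs_of_pos (inv_pos.2 hZtpos),
            inv_mul_cancel₀ hZtpos.ne', mul_one]
          have := mul_le_mul_of_nonneg_left hεF hZpos.le
          linarith
  have hFG : ‖F - G‖ = Real.sqrt (∫ x, (f x - g x) ^ 2 ∂Γ) := by
    rw [hF_def, hG_def, ← MemLp.toLp_sub, norm_toLp_two]
    rfl
  show Real.sqrt (∫ x, (f x - g x) ^ 2 ∂Γ) ≤ ε * (Z + Z ^ 2 * Λ / (1 - Λ * Z * ε))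
  rw [← hFG]
  calc ‖F - G‖ ≤ ε * Z + |Z - Zt| := hnormFG
    _ ≤ ε * Z + ε * (Z ^ 2 * Λ / (1 - Λ * Z * ε)) := by linarith
    _ = ε * (Z + Z ^ 2 * Λ / (1 - Λ * Z * ε)) := by ring
end

section
/- One has ∫_{ℝ^d} |π(x) − π̃(x)| dx ≤ Λ·(Z + C)·ε, where C := Z²Λ/(1 − ΛZε); that is, an L²(Γ) bound of size ε between the normalized eigenfunctions yields an L¹ bound of size Λ(Z+C)ε between the corresponding probability densities. -/
open MeasureTheory
open scoped ENNReal NNReal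

lemma cs_helper {α : Type*} [MeasurableSpace α] (μ : Measure α) [IsFiniteMeasure μ]
    (f : α → ℝ) (hf : AEStronglyMeasurable f μ) (h2 : Integrable (fun x => f x ^ 2) μ) :
    ∫ x, |f x| ∂μ ≤ Real.sqrt (μ Set.univ).toReal * Real.sqrt (∫ x, f x ^ 2 ∂μ) := by
  have hmem : MemLp f 2 μ := (memLp_two_iff_integrable_sq hf).2 h2
  have hpq : (2:ℝ).HolderConjugate 2 := by
    constructor <;> norm_num
  have h1 : MemLp (fun x => |f x|) (ENNReal.ofReal 2) μ := by
    rw [show ENNReal.ofReal 2 = 2 by norm_num]; exact hmem.abs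
  have hc : MemLp (fun _ : α => (1:ℝ)) (ENNReal.ofReal 2) μ := memLp_const 1
  have := integral_mul_le_Lp_mul_Lq_of_nonneg hpq
    (Filter.Eventually.of_forall (fun x => abs_nonneg (f x)))
    (Filter.Eventually.of_forall (fun _ => zero_le_one)) h1 hc
  simp only [mul_one, one_pow] at this
  calc ∫ x, |f x| ∂μ ≤ (∫ x, |f x| ^ (2:ℝ) ∂μ) ^ (1/(2:ℝ)) * (∫ _x, (1:ℝ)^(2:ℝ) ∂μ) ^ (1/(2:ℝ)) := by
        simpa using this
    _ = Real.sqrt (μ Set.univ).toReal * Real.sqrt (∫ x, f x ^ 2 ∂μ) := by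
        rw [mul_comm]
        congr 1
        · rw [Real.rpow_two, one_pow, integral_const, smul_eq_mul, mul_one,
            Real.sqrt_eq_rpow, measureReal_def]
        · rw [Real.sqrt_eq_rpow]
          congr 1
          simp_rw [Real.rpow_two, sq_abs]

lemma conv_helper {α : Type*} [MeasurableSpace α] (μ : Measure α)
    (γ : α → ℝ) (hγm : Measurable γ) (hγpos : ∀ x, 0 < γ x) (g : α → ℝ) :
    ∫ x, g x ∂(μ.withDensity fun x => ENNReal.ofReal (γ x)) = ∫ x, γ x * g x ∂μ := by
  have h : (fun x => ENNReal.ofReal (γ x)) = fun x => ((γ x).toNNReal : ℝ≥0∞) := rfl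
  rw [h, integral_withDensity_eq_integral_smul hγm.real_toNNReal]
  congr 1
  funext x
  rw [NNReal.smul_def, Real.coe_toNNReal _ (hγpos x).le, smul_eq_mul]

lemma alg_helper (Λ Z ε s : ℝ) (hs : s ≠ 0) :
    Z * (Λ * ε) + (Z * (Z / s) * (Λ * ε)) * Λ = Λ * (Z + Z ^ 2 * Λ / s) * ε := by
  field_simp

/-- An L²(Γ) bound of size `ε` between the normalized eigenfunctions yields an L¹ bound of
size `Λ(Z + C)ε` between the corresponding probability densities:
`∫ |π − π̃| dx ≤ Λ(Z + C)ε` with `C = Z²Λ/(1 − ΛZε)`. -/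
theorem integral_abs_density_sub_le_of_normalized_close (d : ℕ) (hd : 1 ≤ d)
    (γ : (Fin d → ℝ) → ℝ) (hγm : Measurable γ) (hγpos : ∀ x, 0 < γ x)
    (Γ : Measure (Fin d → ℝ))
    (hΓ : Γ = volume.withDensity fun x => ENNReal.ofReal (γ x))
    (hfin : Γ Set.univ < ⊤)
    (π πt : (Fin d → ℝ) → ℝ) (hπm : Measurable π) (hπtm : Measurable πt)
    (hπ0 : ∀ x, 0 ≤ π x) (hπt0 : ∀ x, 0 ≤ πt x)
    (hπ1 : ∫ x, π x = 1) (hπt1 : ∫ x, πt x = 1)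
    (hφ2 : Integrable (fun x => (π x / γ x) ^ 2) Γ)
    (hφt2 : Integrable (fun x => (πt x / γ x) ^ 2) Γ)
    (Λ Z Zt : ℝ)
    (hΛ : Λ = Real.sqrt (Γ Set.univ).toReal)
    (hZ : Z = Real.sqrt (∫ x, (π x / γ x) ^ 2 ∂Γ))
    (hZt : Zt = Real.sqrt (∫ x, (πt x / γ x) ^ 2 ∂Γ))
    (hZpos : 0 < Z) (hZtpos : 0 < Zt)
    (ε : ℝ) (hεpos : 0 < ε) (hεsmall : ε < 1 / (Λ * Z))
    (hε : Real.sqrt (∫ x, (π x / γ x / Z - πt x / γ x / Zt) ^ 2 ∂Γ) ≤ ε) :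
    ∫ x, |π x - πt x| ≤ Λ * (Z + Z ^ 2 * Λ / (1 - Λ * Z * ε)) * ε := by
  haveI : IsFiniteMeasure Γ := ⟨hfin⟩
  have hγne : ∀ x, γ x ≠ 0 := fun x => (hγpos x).ne'
  have hconv : ∀ g : (Fin d → ℝ) → ℝ, ∫ x, g x ∂Γ = ∫ x, γ x * g x := by
    intro g; rw [hΓ]; exact conv_helper _ γ hγm hγpos g
  -- basic positivity
  have hΛ0 : 0 ≤ Λ := hΛ ▸ Real.sqrt_nonneg _
  have hΛpos : 0 < Λ := by
    rcases hΛ0.lt_or_eq with h | h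
    · exact h
    · exfalso
      rw [← h, zero_mul, div_zero] at hεsmall
      linarith
  have hΛZpos : 0 < Λ * Z := mul_pos hΛpos hZpos
  have h1ε : Λ * Z * ε < 1 := by
    rw [lt_div_iff₀ hΛZpos] at hεsmall
    nlinarith
  have hden : 0 < 1 - Λ * Z * ε := by linarith
  -- measurability and integrability
  have hφm : Measurable fun x => π x / γ x := hπm.div hγm
  have hψm : Measurable fun x => πt x / γ x := hπtm.div hγm
  have hφmem : MemLp (fun x => π x / γ x) 2 Γ :=
    (memLp_two_iff_integrable_sq hφm.aestronglyMeasurable).2 hφ2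
  have hψmem : MemLp (fun x => πt x / γ x) 2 Γ :=
    (memLp_two_iff_integrable_sq hψm.aestronglyMeasurable).2 hφt2
  have hφint : Integrable (fun x => π x / γ x) Γ := hφmem.integrable one_le_two
  have hψint : Integrable (fun x => πt x / γ x) Γ := hψmem.integrable one_le_two
  -- the normalized difference u
  have humem : MemLp (fun x => π x / γ x / Z - πt x / γ x / Zt) 2 Γ := by
    have h : (fun x => π x / γ x / Z - πt x / γ x / Zt)
        = fun x => (1/Z) * (π x / γ x) - (1/Zt) * (πt x / γ x) := by
      funext x; ring
    rw [h]
    exact (hφmem.const_mul (1/Z)).sub (hψmem.const_mul (1/Zt))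
  have hum : Measurable fun x => π x / γ x / Z - πt x / γ x / Zt :=
    (hφm.div_const Z).sub (hψm.div_const Zt)
  have huint : Integrable (fun x => π x / γ x / Z - πt x / γ x / Zt) Γ :=
    humem.integrable one_le_two
  have hu2 : Integrable (fun x => (π x / γ x / Z - πt x / γ x / Zt) ^ 2) Γ :=
    humem.integrable_sq
  -- the integrals of φ and ψ over Γ equal 1
  have hφ1 : ∫ x, π x / γ x ∂Γ = 1 := by
    rw [hconv, ← hπ1]
    congr 1; funext x
    have := hγne x; field_simp
  have hψ1 : ∫ x, πt x / γ x ∂Γ = 1 := by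
    rw [hconv, ← hπt1]
    congr 1; funext x
    have := hγne x; field_simp
  -- squares of Z, Zt
  have hZsq : ∫ x, (π x / γ x) ^ 2 ∂Γ = Z ^ 2 := by
    rw [hZ, Real.sq_sqrt (integral_nonneg fun x => sq_nonneg _)]
  have hZtsq : ∫ x, (πt x / γ x) ^ 2 ∂Γ = Zt ^ 2 := by
    rw [hZt, Real.sq_sqrt (integral_nonneg fun x => sq_nonneg _)]
  -- Cauchy-Schwarz on u
  have hcsu : ∫ x, |π x / γ x / Z - πt x / γ x / Zt| ∂Γ ≤ Λ * ε := by
    calc ∫ x, |π x / γ x / Z - πt x / γ x / Zt| ∂Γ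
        ≤ Real.sqrt (Γ Set.univ).toReal *
          Real.sqrt (∫ x, (π x / γ x / Z - πt x / γ x / Zt) ^ 2 ∂Γ) :=
          cs_helper Γ _ hum.aestronglyMeasurable hu2
      _ = Λ * Real.sqrt (∫ x, (π x / γ x / Z - πt x / γ x / Zt) ^ 2 ∂Γ) := by rw [hΛ]
      _ ≤ Λ * ε := mul_le_mul_of_nonneg_left hε hΛ0
  -- Cauchy-Schwarz on ψ/Zt
  have hveq : (fun x => (πt x / γ x / Zt) ^ 2) = fun x => (1/Zt^2) * (πt x / γ x) ^ 2 := by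
    funext x; field_simp
  have hv2int : Integrable (fun x => (πt x / γ x / Zt) ^ 2) Γ := by
    rw [hveq]; exact hφt2.const_mul _
  have hv2 : ∫ x, (πt x / γ x / Zt) ^ 2 ∂Γ = 1 := by
    rw [hveq, integral_const_mul, hZtsq]
    field_simp
  have hcsv : ∫ x, |πt x / γ x / Zt| ∂Γ ≤ Λ := by
    have h := cs_helper Γ (fun x => πt x / γ x / Zt)
      (hψm.div_const Zt).aestronglyMeasurable hv2int
    rw [hv2, Real.sqrt_one, mul_one, ← hΛ] at h
    exact h
  -- the value of ∫ u
  have hintu : ∫ x, (π x / γ x / Z - πt x / γ x / Zt) ∂Γ = 1/Z - 1/Zt := by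
    rw [integral_sub (hφint.div_const Z) (hψint.div_const Zt),
      integral_div, integral_div, hφ1, hψ1]
  have habs : |1/Z - 1/Zt| ≤ Λ * ε := by
    rw [← hintu]
    calc |∫ x, (π x / γ x / Z - πt x / γ x / Zt) ∂Γ|
        ≤ ∫ x, |π x / γ x / Z - πt x / γ x / Zt| ∂Γ := by
          simpa [Real.norm_eq_abs] using
            norm_integral_le_integral_norm (fun x => π x / γ x / Z - πt x / γ x / Zt) (μ := Γ)
      _ ≤ Λ * ε := hcsu
  -- bound on Zt
  have hZt_le : Zt ≤ Z / (1 - Λ * Z * ε) := by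
    have h1 : 1/Z - Λ*ε ≤ 1/Zt := by
      have := abs_le.1 habs; linarith
    have heq : (1 - Λ*Z*ε)/Z = 1/Z - Λ*ε := by
      field_simp
    have h2 : (1 - Λ*Z*ε)/Z ≤ 1/Zt := heq ▸ h1
    have h3 := (div_le_div_iff₀ hZpos hZtpos).1 h2
    rw [le_div_iff₀ hden]
    nlinarith
  -- bound on |Z - Zt|
  have hZdiff : |Z - Zt| ≤ Z * Zt * (Λ * ε) := by
    have h : 1/Z - 1/Zt = (Zt - Z)/(Z*Zt) := by
      field_simp
    rw [h, abs_div, abs_of_pos (mul_pos hZpos hZtpos)] at habs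
    have h2 := (div_le_iff₀ (mul_pos hZpos hZtpos)).1 habs
    rw [abs_sub_comm]
    have h3 : Λ * ε * (Z * Zt) = Z * Zt * (Λ * ε) := by ring
    linarith
  have hkey : |Z - Zt| ≤ Z * (Z / (1 - Λ*Z*ε)) * (Λ * ε) := by
    refine hZdiff.trans ?_
    have := mul_le_mul_of_nonneg_left hZt_le hZpos.le
    exact mul_le_mul_of_nonneg_right this (mul_nonneg hΛ0 hεpos.le)
  -- pointwise bound
  have hptwise : ∀ x, |π x / γ x - πt x / γ x|
      ≤ Z * |π x / γ x / Z - πt x / γ x / Zt| + |Z - Zt| * |πt x / γ x / Zt| := by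
    intro x
    have h : π x / γ x - πt x / γ x
        = Z * (π x / γ x / Z - πt x / γ x / Zt) + (Z - Zt) * (πt x / γ x / Zt) := by
      have := hγne x
      field_simp
      ring
    rw [h]
    refine (abs_add_le _ _).trans ?_
    rw [abs_mul, abs_mul, abs_of_pos hZpos]
  have hsubabs : Integrable (fun x => |π x / γ x - πt x / γ x|) Γ := (hφint.sub hψint).abs
  have hint1 : Integrable (fun x => Z * |π x / γ x / Z - πt x / γ x / Zt|) Γ :=
    huint.abs.const_mul Z
  have hint2 : Integrable (fun x => |Z - Zt| * |πt x / γ x / Zt|) Γ :=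
    (hψint.div_const Zt).abs.const_mul _
  have hmain : ∫ x, |π x / γ x - πt x / γ x| ∂Γ ≤ Z * (Λ * ε) + |Z - Zt| * Λ := by
    calc ∫ x, |π x / γ x - πt x / γ x| ∂Γ
        ≤ ∫ x, (Z * |π x / γ x / Z - πt x / γ x / Zt| + |Z - Zt| * |πt x / γ x / Zt|) ∂Γ :=
          integral_mono hsubabs (hint1.add hint2) hptwise
      _ = Z * ∫ x, |π x / γ x / Z - πt x / γ x / Zt| ∂Γ
          + |Z - Zt| * ∫ x, |πt x / γ x / Zt| ∂Γ := by
          rw [integral_add hint1 hint2, integral_const_mul, integral_const_mul]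
      _ ≤ Z * (Λ * ε) + |Z - Zt| * Λ := by
          exact add_le_add (mul_le_mul_of_nonneg_left hcsu hZpos.le)
            (mul_le_mul_of_nonneg_left hcsv (abs_nonneg _))
  -- convert the goal
  have hgoalconv : ∫ x, |π x - πt x| = ∫ x, |π x / γ x - πt x / γ x| ∂Γ := by
    rw [hconv]
    congr 1; funext x
    have h : γ x * (π x / γ x - πt x / γ x) = π x - πt x := by
      have := hγne x; field_simp
    calc |π x - πt x| = |γ x * (π x / γ x - πt x / γ x)| := by rw [h]
      _ = γ x * |π x / γ x - πt x / γ x| := by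
          rw [abs_mul, abs_of_pos (hγpos x)]
  calc ∫ x, |π x - πt x| = ∫ x, |π x / γ x - πt x / γ x| ∂Γ := hgoalconv
    _ ≤ Z * (Λ * ε) + |Z - Zt| * Λ := hmain
    _ ≤ Z * (Λ * ε) + (Z * (Z / (1 - Λ*Z*ε)) * (Λ * ε)) * Λ := by
        have := mul_le_mul_of_nonneg_right hkey hΛ0
        linarith
    _ = Λ * (Z + Z ^ 2 * Λ / (1 - Λ * Z * ε)) * ε := alg_helper Λ Z ε _ hden.ne'
end

section
/- Suppose Γ({x : κ(x) > M}) > 0 and λ₀ ≤ M. Then ∫_{ℝ^d} max(κ(x) − M, 0)·φ₀(x)² Γ(dx) > 0, and consequently the perturbed quadratic form evaluated at φ₀ satisfies ⟨φ₀, Lφ₀⟩ − ∫ max(κ − M, 0)·φ₀² dΓ < λ₀ ≤ M; in particular the bottom of the variational spectrum of the generator with truncated killing rate is strictly smaller than both λ₀ and M. -/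
open MeasureTheory RealInnerProductSpace

/-- Truncation strictly lowers the bottom of the variational spectrum: if
`Γ({κ > M}) > 0` and `lam0 ≤ M`, then `∫ (κ − M)₊ φ₀² dΓ > 0` and
`⟨φ₀, Lφ₀⟩ − ∫ (κ − M)₊ φ₀² dΓ < lam0`. -/
theorem truncated_form_lt_bottom_eigenvalue (d : ℕ) (hd : 1 ≤ d)
    (Γ : Measure (Fin d → ℝ))
    (D : Submodule ℝ (Lp ℝ 2 Γ)) (hD : Dense (D : Set (Lp ℝ 2 Γ)))
    (L : D →ₗ[ℝ] Lp ℝ 2 Γ)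
    (hsym : ∀ f g : D, ⟪L f, (g : Lp ℝ 2 Γ)⟫ = ⟪(f : Lp ℝ 2 Γ), L g⟫)
    (κ : (Fin d → ℝ) → ℝ) (hκm : Measurable κ) (hκ0 : ∀ x, 0 ≤ κ x)
    (M : ℝ) (hM : 0 ≤ M)
    (φ₀ : D) (hφ₀norm : ‖(φ₀ : Lp ℝ 2 Γ)‖ = 1)
    (lam0 : ℝ) (heig : L φ₀ = lam0 • (φ₀ : Lp ℝ 2 Γ))
    (hφ₀pos : ∀ᵐ x ∂Γ, 0 < ((φ₀ : Lp ℝ 2 Γ) : (Fin d → ℝ) → ℝ) x)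
    (hint : Integrable
      (fun x => (max (κ x - M) 0) ^ 2 * (((φ₀ : Lp ℝ 2 Γ) : (Fin d → ℝ) → ℝ) x) ^ 2) Γ)
    (hΓκ : 0 < Γ {x | M < κ x})
    (hlam0M : lam0 ≤ M) :
    0 < ∫ x, max (κ x - M) 0 * (((φ₀ : Lp ℝ 2 Γ) : (Fin d → ℝ) → ℝ) x) ^ 2 ∂Γ ∧
    ⟪(φ₀ : Lp ℝ 2 Γ), L φ₀⟫ -
        ∫ x, max (κ x - M) 0 * (((φ₀ : Lp ℝ 2 Γ) : (Fin d → ℝ) → ℝ) x) ^ 2 ∂Γ < lam0 := by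
  set φ : (Fin d → ℝ) → ℝ := ((φ₀ : Lp ℝ 2 Γ) : (Fin d → ℝ) → ℝ) with hφdef
  have hφmeas : AEStronglyMeasurable φ Γ := Lp.aestronglyMeasurable _
  -- φ² is integrable
  have hφ2 : Integrable (fun x => φ x ^ 2) Γ :=
    (memLp_two_iff_integrable_sq hφmeas).mp (Lp.memLp _)
  -- the integrand is integrable
  have hmeas : AEStronglyMeasurable (fun x => max (κ x - M) 0 * φ x ^ 2) Γ := by
    have h1 : AEStronglyMeasurable (fun x => max (κ x - M) 0 * (φ x * φ x)) Γ :=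
      (((hκm.sub measurable_const).max measurable_const).aestronglyMeasurable).mul
        (hφmeas.mul hφmeas)
    exact h1.congr (Filter.Eventually.of_forall fun x => by ring)
  have hI : Integrable (fun x => max (κ x - M) 0 * φ x ^ 2) Γ := by
    refine Integrable.mono' (hint.add hφ2) hmeas ?_
    filter_upwards with x
    have h0 : 0 ≤ max (κ x - M) 0 := le_max_right _ _
    rw [Real.norm_eq_abs, abs_of_nonneg (mul_nonneg h0 (sq_nonneg _))]
    simp only [Pi.add_apply]
    nlinarith [sq_nonneg (max (κ x - M) 0 - 1), sq_nonneg (φ x),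
      mul_nonneg (mul_nonneg h0 h0) (sq_nonneg (φ x))]
  have hpos : 0 < ∫ x, max (κ x - M) 0 * φ x ^ 2 ∂Γ := by
    have hnn : 0 ≤ᵐ[Γ] fun x => max (κ x - M) 0 * φ x ^ 2 :=
      Filter.Eventually.of_forall fun x =>
        mul_nonneg (le_max_right _ _) (sq_nonneg _)
    rw [integral_pos_iff_support_of_nonneg_ae hnn hI]
    -- {κ > M} ∩ {φ > 0} ⊆ support
    have hsub : {x | M < κ x} ⊆
        (Function.support fun x => max (κ x - M) 0 * φ x ^ 2) ∪ {x | ¬ 0 < φ x} := by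
      intro x hx
      by_cases hφx : 0 < φ x
      · left
        have h1 : 0 < max (κ x - M) 0 := lt_max_of_lt_left (sub_pos.mpr hx)
        exact ne_of_gt (mul_pos h1 (pow_pos hφx 2))
      · exact Or.inr hφx
    have hnull : Γ {x | ¬ 0 < φ x} = 0 := ae_iff.mp hφ₀pos
    have h3 := (lt_of_lt_of_le hΓκ (measure_mono hsub)).trans_le (measure_union_le _ _)
    rwa [hnull, add_zero] at h3
  refine ⟨hpos, ?_⟩
  have hinner : ⟪(φ₀ : Lp ℝ 2 Γ), L φ₀⟫ = lam0 := by
    rw [heig, real_inner_smul_right, real_inner_self_eq_norm_sq, hφ₀norm]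
    ring
  rw [hinner]
  linarith
end

section
/- One has ‖L̂φ₀ − λ₀φ₀‖ ≥ δ·√(1 − ⟨φ₀, φ̂₀⟩²). -/
open RealInnerProductSpace

/-- Sin-Θ type lower bound: if `L̂` is symmetric with unit eigenvector `φ̂₀`, and
`⟨f, L̂f⟩ ≥ λ₀ + δ` for every unit `f ∈ D` orthogonal to `φ̂₀`, then for every unit `f ∈ D`,
`‖L̂φ₀ − λ₀φ₀‖ ≥ δ·√(1 − ⟨φ₀, φ̂₀⟩²)`. -/
theorem norm_residual_ge_delta_sinTheta
    {E : Type*} [NormedAddCommGroup E] [InnerProductSpace ℝ E] [CompleteSpace E]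
    (D : Submodule ℝ E) (hD : Dense (D : Set E))
    (Lh : D →ₗ[ℝ] E)
    (hsym : ∀ f g : D, ⟪Lh f, (g : E)⟫ = ⟪(f : E), Lh g⟫)
    (φh : D) (hφh : ‖(φh : E)‖ = 1)
    (lamh : ℝ) (heig : Lh φh = lamh • (φh : E))
    (lam0 δ : ℝ) (hδ : 0 < δ)
    (hsep : ∀ f : D, ‖(f : E)‖ = 1 → ⟪(f : E), (φh : E)⟫ = 0 → lam0 + δ ≤ ⟪(f : E), Lh f⟫)
    (φ0 : D) (hφ0 : ‖(φ0 : E)‖ = 1) :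
    δ * Real.sqrt (1 - ⟪(φ0 : E), (φh : E)⟫ ^ 2) ≤ ‖Lh φ0 - lam0 • (φ0 : E)‖ := by
  set c : ℝ := ⟪(φ0 : E), (φh : E)⟫ with hc
  set ψ : D := φ0 - c • φh with hψdef
  have hψcoe : (ψ : E) = (φ0 : E) - c • (φh : E) := rfl
  clear_value ψ
  have hφhφh : ⟪(φh : E), (φh : E)⟫ = 1 := by
    rw [real_inner_self_eq_norm_sq, hφh]; norm_num
  have hφ0φ0 : ⟪(φ0 : E), (φ0 : E)⟫ = 1 := by
    rw [real_inner_self_eq_norm_sq, hφ0]; norm_num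
  have hψφh : ⟪(ψ : E), (φh : E)⟫ = 0 := by
    rw [hψcoe, inner_sub_left, real_inner_smul_left, hφhφh, ← hc]; ring
  have hψφ0 : ⟪(ψ : E), (φ0 : E)⟫ = 1 - c ^ 2 := by
    have hcomm : ⟪(φh : E), (φ0 : E)⟫ = ⟪(φ0 : E), (φh : E)⟫ := real_inner_comm _ _
    rw [hψcoe, inner_sub_left, real_inner_smul_left, hφ0φ0, hcomm, ← hc]; ring
  have hn : ‖(ψ : E)‖ ^ 2 = 1 - c ^ 2 := by
    rw [← real_inner_self_eq_norm_sq, hψcoe, inner_sub_right, real_inner_smul_right,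
      ← hψcoe, hψφh, hψφ0]; ring
  set t : ℝ := ‖(ψ : E)‖ with ht
  clear_value t
  have hsqrt : Real.sqrt (1 - c ^ 2) = t := by
    rw [← hn, Real.sqrt_sq (by rw [ht]; exact norm_nonneg _)]
  rw [hsqrt]
  rcases eq_or_lt_of_le (norm_nonneg (ψ : E)) with h0 | hpos
  · have ht0 : t = 0 := by rw [ht, ← h0]
    rw [ht0, mul_zero]; exact norm_nonneg _
  · rw [← ht] at hpos
    set f : D := (t⁻¹ : ℝ) • ψ with hfdef
    have hfcoe : (f : E) = t⁻¹ • (ψ : E) := rfl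
    clear_value f
    have hf1 : ‖(f : E)‖ = 1 := by
      rw [hfcoe, norm_smul, norm_inv, Real.norm_eq_abs, abs_of_pos hpos, ← ht,
        inv_mul_cancel₀ (ne_of_gt hpos)]
    have hforth : ⟪(f : E), (φh : E)⟫ = 0 := by
      rw [hfcoe, real_inner_smul_left, hψφh, mul_zero]
    have hs := hsep f hf1 hforth
    have hLf : Lh f = t⁻¹ • Lh ψ := by rw [hfdef, map_smul]
    have hinnerf : ⟪(f : E), Lh f⟫ = t⁻¹ * (t⁻¹ * ⟪(ψ : E), Lh ψ⟫) := by
      rw [hfcoe, hLf, real_inner_smul_left, real_inner_smul_right]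
    have key : (lam0 + δ) * t ^ 2 ≤ ⟪(ψ : E), Lh ψ⟫ := by
      rw [hinnerf] at hs
      have h3 : t⁻¹ * (t⁻¹ * ⟪(ψ : E), Lh ψ⟫) * t ^ 2 = ⟪(ψ : E), Lh ψ⟫ := by
        field_simp
      have h4 := mul_le_mul_of_nonneg_right hs (sq_nonneg t)
      linarith [h4, h3.ge, h3.le]
    have hLψ : Lh ψ = Lh φ0 - c • (lamh • (φh : E)) := by
      rw [hψdef, map_sub, map_smul, heig]
    have hψLφ0 : ⟪(ψ : E), Lh φ0⟫ = ⟪(ψ : E), Lh ψ⟫ := by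
      rw [hLψ, inner_sub_right, real_inner_smul_right, real_inner_smul_right, hψφh]; ring
    have main : δ * t ^ 2 ≤ ⟪(ψ : E), Lh φ0 - lam0 • (φ0 : E)⟫ := by
      rw [inner_sub_right, real_inner_smul_right, hψLφ0, hψφ0, ← hn]
      have hexp : (lam0 + δ) * t ^ 2 = lam0 * t ^ 2 + δ * t ^ 2 := by ring
      linarith [key, hexp.le, hexp.ge]
    have hcs := real_inner_le_norm (ψ : E) (Lh φ0 - lam0 • (φ0 : E))
    rw [← ht] at hcs
    nlinarith [main, hcs, hpos, norm_nonneg (Lh φ0 - lam0 • (φ0 : E))]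
end

section
/- If in addition ⟨φ₀, φ̂₀⟩ ≥ 0, then ‖φ̂₀ − φ₀‖ ≤ (√2 / √(1 + ⟨φ₀, φ̂₀⟩)) · ‖L̂φ₀ − λ₀φ₀‖ / δ ≤ √2 · ‖L̂φ₀ − λ₀φ₀‖ / δ. -/
open RealInnerProductSpace

/-- Perturbation bound under a `δ`-separation condition: if in addition `⟨φ₀, φ̂₀⟩ ≥ 0`, then
`‖φ̂₀ − φ₀‖ ≤ (√2 / √(1 + ⟨φ₀, φ̂₀⟩)) · ‖L̂φ₀ − λ₀φ₀‖ / δ ≤ √2 · ‖L̂φ₀ − λ₀φ₀‖ / δ`. -/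
theorem norm_eigenfunction_sub_le_of_delta_separation
    {E : Type*} [NormedAddCommGroup E] [InnerProductSpace ℝ E] [CompleteSpace E]
    (D : Submodule ℝ E) (hD : Dense (D : Set E))
    (Lh : D →ₗ[ℝ] E)
    (hsym : ∀ f g : D, ⟪Lh f, (g : E)⟫ = ⟪(f : E), Lh g⟫)
    (φh : D) (hφh : ‖(φh : E)‖ = 1)
    (lamh : ℝ) (heig : Lh φh = lamh • (φh : E))
    (lam0 δ : ℝ) (hδ : 0 < δ)
    (hsep : ∀ f : D, ‖(f : E)‖ = 1 → ⟪(f : E), (φh : E)⟫ = 0 → lam0 + δ ≤ ⟪(f : E), Lh f⟫)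
    (φ0 : D) (hφ0 : ‖(φ0 : E)‖ = 1)
    (hsign : 0 ≤ ⟪(φ0 : E), (φh : E)⟫) :
    ‖(φh : E) - (φ0 : E)‖ ≤
        (Real.sqrt 2 / Real.sqrt (1 + ⟪(φ0 : E), (φh : E)⟫)) *
          ‖Lh φ0 - lam0 • (φ0 : E)‖ / δ ∧
    (Real.sqrt 2 / Real.sqrt (1 + ⟪(φ0 : E), (φh : E)⟫)) * ‖Lh φ0 - lam0 • (φ0 : E)‖ / δ ≤
        Real.sqrt 2 * ‖Lh φ0 - lam0 • (φ0 : E)‖ / δ := by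
  set c : ℝ := ⟪(φ0 : E), (φh : E)⟫ with hc
  set r : E := Lh φ0 - lam0 • (φ0 : E) with hr
  have h1c : (0:ℝ) < 1 + c := by linarith
  have hs1c : (0:ℝ) < Real.sqrt (1 + c) := Real.sqrt_pos.mpr h1c
  -- the orthogonal part
  set g : D := φ0 - c • φh with hgdef
  have hgE : (g : E) = (φ0 : E) - c • (φh : E) := by simp [hgdef]
  have hperp : ⟪(g : E), (φh : E)⟫ = 0 := by
    rw [hgE, inner_sub_left, real_inner_smul_left, real_inner_self_eq_norm_sq, hφh, ← hc]
    ring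
  have hgφ0 : ⟪(g : E), (φ0 : E)⟫ = 1 - c ^ 2 := by
    rw [hgE, inner_sub_left, real_inner_smul_left, real_inner_self_eq_norm_sq, hφ0,
      real_inner_comm (φ0 : E) (φh : E), ← hc]
    ring
  have hng : ‖(g : E)‖ ^ 2 = 1 - c ^ 2 := by
    rw [← real_inner_self_eq_norm_sq, hgE, inner_sub_right, real_inner_smul_right, ← hgE,
      hperp, hgφ0]
    ring
  -- the quadratic-form bound on the orthogonal complement
  have hquad : (lam0 + δ) * ‖(g : E)‖ ^ 2 ≤ ⟪(g : E), Lh g⟫ := by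
    rcases eq_or_ne (g : E) 0 with h0 | h0
    · have hg0 : g = 0 := Subtype.ext h0
      rw [hg0]
      simp
    · have hn : (0:ℝ) < ‖(g : E)‖ := norm_pos_iff.mpr h0
      have key := hsep (‖(g : E)‖⁻¹ • g) ?_ ?_
      · have hcoe : ((‖(g : E)‖⁻¹ • g : D) : E) = ‖(g : E)‖⁻¹ • (g : E) := rfl
        rw [hcoe, map_smul, real_inner_smul_left, real_inner_smul_right] at key
        have h2 : (lam0 + δ) * ‖(g : E)‖ ^ 2 ≤
            ‖(g : E)‖⁻¹ * (‖(g : E)‖⁻¹ * ⟪(g : E), Lh g⟫) * ‖(g : E)‖ ^ 2 := by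
          nlinarith [sq_nonneg ‖(g : E)‖]
        calc (lam0 + δ) * ‖(g : E)‖ ^ 2 ≤
            ‖(g : E)‖⁻¹ * (‖(g : E)‖⁻¹ * ⟪(g : E), Lh g⟫) * ‖(g : E)‖ ^ 2 := h2
          _ = ⟪(g : E), Lh g⟫ := by
            field_simp [hn.ne']
      · show ‖(‖(g : E)‖⁻¹ • (g : E))‖ = 1
        rw [norm_smul, norm_inv, norm_norm, inv_mul_cancel₀ hn.ne']
      · show ⟪‖(g : E)‖⁻¹ • (g : E), (φh : E)⟫ = 0
        rw [real_inner_smul_left, hperp, mul_zero]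
  -- decompose φ0 and compute the inner product with the residual
  have hφ0g : φ0 = g + c • φh := by rw [hgdef]; abel
  have hLφ0 : Lh φ0 = Lh g + (c * lamh) • (φh : E) := by
    rw [hφ0g, map_add, map_smul, heig, smul_smul]
  have hinner : ⟪(g : E), r⟫ = ⟪(g : E), Lh g⟫ - lam0 * (1 - c ^ 2) := by
    rw [hr, inner_sub_right, hLφ0, inner_add_right, real_inner_smul_right, hperp,
      real_inner_smul_right, hgφ0]
    ring
  have hkey : δ * ‖(g : E)‖ ^ 2 ≤ ‖(g : E)‖ * ‖r‖ := by
    have hcs := real_inner_le_norm (g : E) r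
    have hq2 : lam0 * (1 - c ^ 2) + δ * ‖(g : E)‖ ^ 2 ≤ ⟪(g : E), Lh g⟫ := by
      calc lam0 * (1 - c ^ 2) + δ * ‖(g : E)‖ ^ 2
          = (lam0 + δ) * ‖(g : E)‖ ^ 2 := by rw [hng]; ring
        _ ≤ ⟪(g : E), Lh g⟫ := hquad
    linarith [hq2, hinner, hcs]
  have hgle : δ * ‖(g : E)‖ ≤ ‖r‖ := by
    rcases eq_or_lt_of_le (norm_nonneg (g : E)) with h0 | h0
    · rw [← h0, mul_zero]; exact norm_nonneg r
    · have := le_of_mul_le_mul_right (by nlinarith : (δ * ‖(g : E)‖) * ‖(g : E)‖ ≤ ‖r‖ * ‖(g : E)‖) h0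
      exact this
  -- norm of the difference
  have hdiff : ‖(φh : E) - (φ0 : E)‖ ^ 2 = 2 - 2 * c := by
    rw [norm_sub_sq_real, hφh, hφ0, real_inner_comm (φ0 : E) (φh : E), ← hc]
    ring
  have hAB : ‖(φh : E) - (φ0 : E)‖ * Real.sqrt (1 + c) ≤ Real.sqrt 2 * ‖(g : E)‖ := by
    have hA0 : 0 ≤ ‖(φh : E) - (φ0 : E)‖ * Real.sqrt (1 + c) :=
      mul_nonneg (norm_nonneg _) hs1c.le
    have hB0 : 0 ≤ Real.sqrt 2 * ‖(g : E)‖ :=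
      mul_nonneg (Real.sqrt_nonneg 2) (norm_nonneg _)
    have hsq : (‖(φh : E) - (φ0 : E)‖ * Real.sqrt (1 + c)) ^ 2
        = (Real.sqrt 2 * ‖(g : E)‖) ^ 2 := by
      rw [mul_pow, mul_pow, Real.sq_sqrt h1c.le, Real.sq_sqrt (by norm_num : (0:ℝ) ≤ 2),
        hdiff, hng]
      ring
    refine le_of_eq ?_
    calc ‖(φh : E) - (φ0 : E)‖ * Real.sqrt (1 + c)
        = Real.sqrt ((‖(φh : E) - (φ0 : E)‖ * Real.sqrt (1 + c)) ^ 2) :=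
          (Real.sqrt_sq hA0).symm
      _ = Real.sqrt ((Real.sqrt 2 * ‖(g : E)‖) ^ 2) := by rw [hsq]
      _ = Real.sqrt 2 * ‖(g : E)‖ := Real.sqrt_sq hB0
  constructor
  · rw [div_mul_eq_mul_div, div_div,
      le_div_iff₀ (by positivity : (0:ℝ) < Real.sqrt (1 + c) * δ)]
    calc ‖(φh : E) - (φ0 : E)‖ * (Real.sqrt (1 + c) * δ)
        = (‖(φh : E) - (φ0 : E)‖ * Real.sqrt (1 + c)) * δ := by ring
      _ ≤ (Real.sqrt 2 * ‖(g : E)‖) * δ := mul_le_mul_of_nonneg_right hAB hδ.le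
      _ = Real.sqrt 2 * (δ * ‖(g : E)‖) := by ring
      _ ≤ Real.sqrt 2 * ‖r‖ := mul_le_mul_of_nonneg_left hgle (Real.sqrt_nonneg 2)
  · have h1le : (1:ℝ) ≤ Real.sqrt (1 + c) := by
      have h := Real.sqrt_le_sqrt (show (1:ℝ) ≤ 1 + c by linarith)
      rwa [Real.sqrt_one] at h
    have hdle : Real.sqrt 2 / Real.sqrt (1 + c) ≤ Real.sqrt 2 :=
      div_le_self (Real.sqrt_nonneg 2) h1le
    have hmul : Real.sqrt 2 / Real.sqrt (1 + c) * ‖r‖ ≤ Real.sqrt 2 * ‖r‖ :=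
      mul_le_mul_of_nonneg_right hdle (norm_nonneg r)
    exact div_le_div_of_nonneg_right hmul hδ.le
end

section
/- For every real number M ≥ 0, ∫_{√M}^{∞} (x² − M)² e^{−3x²/2} dx ≤ (1/2) · (105√π/16)^{1/2} · (π/2)^{1/4} · e^{−M}; in particular, in the killed Ornstein–Uhlenbeck example the truncation perturbation satisfies ‖H_M φ₀‖₂² = 2·(3/(2π))^{1/2} ∫_{√M}^{∞}(x² − M)² e^{−3x²/2} dx ≤ (3/(2π))^{1/2} (105√π/16)^{1/2} (π/2)^{1/4} e^{−M}, which decays exponentially in the truncation level M. -/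
open MeasureTheory Real

/-- Key scalar inequality: `t² e^(-3t/2) ≤ (25/(9e²)) e^(-3t/10)` for `t ≥ 0`. -/
lemma ou_aux_sq_exp (t : ℝ) (ht : 0 ≤ t) :
    t ^ 2 * Real.exp (-(3 * t) / 2) ≤
      25 / (9 * Real.exp 1 ^ 2) * Real.exp (-(3 / 10) * t) := by
  have hA : (0 : ℝ) < Real.exp (-(3 * t) / 2) := Real.exp_pos _
  have he : (0 : ℝ) < Real.exp 1 := Real.exp_pos 1
  have h1 : Real.exp 1 * (3 / 5 * t) ≤ Real.exp (3 / 5 * t) := by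
    have h2 := Real.add_one_le_exp (3 / 5 * t - 1)
    have h3 : Real.exp (3 / 5 * t) = Real.exp 1 * Real.exp (3 / 5 * t - 1) := by
      rw [← Real.exp_add]; ring_nf
    nlinarith [Real.exp_pos (3 / 5 * t - 1)]
  have h4 : (Real.exp 1 * (3 / 5 * t)) ^ 2 ≤ Real.exp (3 / 5 * t) ^ 2 := by
    apply pow_le_pow_left₀ (by positivity) h1
  have h5 : Real.exp (3 / 5 * t) ^ 2 = Real.exp (6 / 5 * t) := by
    rw [sq, ← Real.exp_add]; ring_nf
  have key : 9 * Real.exp 1 ^ 2 * t ^ 2 ≤ 25 * Real.exp (6 / 5 * t) := by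
    nlinarith [h4, h5]
  have hE : Real.exp (-(3 / 10) * t) = Real.exp (-(3 * t) / 2) * Real.exp (6 / 5 * t) := by
    rw [← Real.exp_add]; ring_nf
  calc t ^ 2 * Real.exp (-(3 * t) / 2)
      ≤ (25 / (9 * Real.exp 1 ^ 2) * Real.exp (6 / 5 * t)) * Real.exp (-(3 * t) / 2) := by
        apply mul_le_mul_of_nonneg_right _ hA.le
        rw [div_mul_eq_mul_div, le_div_iff₀ (by positivity)]
        nlinarith [key]
    _ = 25 / (9 * Real.exp 1 ^ 2) * Real.exp (-(3 / 10) * t) := by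
        rw [hE]; ring

/-- Exponential decay of the truncation perturbation in the killed Ornstein–Uhlenbeck example:
for every `M ≥ 0`, `∫_{√M}^∞ (x² − M)² e^{−3x²/2} dx ≤ (1/2)·(105√π/16)^{1/2}·(π/2)^{1/4}·e^{−M}`,
and consequently `‖H_M φ₀‖₂² = 2·(3/(2π))^{1/2} ∫_{√M}^∞ (x² − M)² e^{−3x²/2} dx
≤ (3/(2π))^{1/2}·(105√π/16)^{1/2}·(π/2)^{1/4}·e^{−M}`, where `φ₀(x) = (3/(2π))^{1/4} e^{−x²/2}`,
`Γ(dx) = e^{−x²/2} dx` and `H_M f = −(x² − M)₊ f`. -/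
theorem ou_truncation_perturbation_bound (M : ℝ) (hM : 0 ≤ M) :
    (∫ x in Set.Ioi (Real.sqrt M), (x ^ 2 - M) ^ 2 * Real.exp (-3 * x ^ 2 / 2)) ≤
      (1 / 2) * Real.sqrt (105 * Real.sqrt Real.pi / 16) * (Real.pi / 2) ^ ((1 : ℝ) / 4) *
        Real.exp (-M) ∧
    (∫ x : ℝ, (max (x ^ 2 - M) 0) ^ 2 *
        ((3 / (2 * Real.pi)) ^ ((1 : ℝ) / 4) * Real.exp (-x ^ 2 / 2)) ^ 2 *
        Real.exp (-x ^ 2 / 2)) =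
      2 * Real.sqrt (3 / (2 * Real.pi)) *
        ∫ x in Set.Ioi (Real.sqrt M), (x ^ 2 - M) ^ 2 * Real.exp (-3 * x ^ 2 / 2) ∧
    (∫ x : ℝ, (max (x ^ 2 - M) 0) ^ 2 *
        ((3 / (2 * Real.pi)) ^ ((1 : ℝ) / 4) * Real.exp (-x ^ 2 / 2)) ^ 2 *
        Real.exp (-x ^ 2 / 2)) ≤
      Real.sqrt (3 / (2 * Real.pi)) * Real.sqrt (105 * Real.sqrt Real.pi / 16) *
        (Real.pi / 2) ^ ((1 : ℝ) / 4) * Real.exp (-M) := by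
  set s : ℝ := Real.sqrt M with hs_def
  have hs : 0 ≤ s := Real.sqrt_nonneg M
  have hss : s * s = M := Real.mul_self_sqrt hM
  set f : ℝ → ℝ := fun x => (x ^ 2 - M) ^ 2 * Real.exp (-3 * x ^ 2 / 2) with hf_def
  set g : ℝ → ℝ := fun x =>
    (25 / (9 * Real.exp 1 ^ 2) * Real.exp (-(3 * M) / 2)) *
      Real.exp (-(3 / 10) * (x - s) ^ 2) with hg_def
  -- pointwise bound on `Ioi s`
  have hfg : ∀ x ∈ Set.Ioi s, f x ≤ g x := by
    intro x hx
    have hxs : s ≤ x := le_of_lt hx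
    have hx0 : 0 ≤ x := le_trans hs hxs
    have hxM : M ≤ x ^ 2 := by nlinarith
    have hu : (x - s) ^ 2 ≤ x ^ 2 - M := by nlinarith [mul_le_mul_of_nonneg_right hxs hs]
    have hsplit : Real.exp (-3 * x ^ 2 / 2) =
        Real.exp (-(3 * (x ^ 2 - M)) / 2) * Real.exp (-(3 * M) / 2) := by
      rw [← Real.exp_add]; ring_nf
    have h1 : (x ^ 2 - M) ^ 2 * Real.exp (-(3 * (x ^ 2 - M)) / 2) ≤
        25 / (9 * Real.exp 1 ^ 2) * Real.exp (-(3 / 10) * (x ^ 2 - M)) :=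
      ou_aux_sq_exp _ (by linarith)
    have h2 : Real.exp (-(3 / 10) * (x ^ 2 - M)) ≤ Real.exp (-(3 / 10) * (x - s) ^ 2) := by
      apply Real.exp_le_exp.2; nlinarith
    calc f x = ((x ^ 2 - M) ^ 2 * Real.exp (-(3 * (x ^ 2 - M)) / 2)) *
          Real.exp (-(3 * M) / 2) := by rw [hf_def]; simp only; rw [hsplit]; ring
      _ ≤ (25 / (9 * Real.exp 1 ^ 2) * Real.exp (-(3 / 10) * (x ^ 2 - M))) *
          Real.exp (-(3 * M) / 2) := by
          exact mul_le_mul_of_nonneg_right h1 (Real.exp_pos _).le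
      _ ≤ (25 / (9 * Real.exp 1 ^ 2) * Real.exp (-(3 / 10) * (x - s) ^ 2)) *
          Real.exp (-(3 * M) / 2) := by
          apply mul_le_mul_of_nonneg_right _ (Real.exp_pos _).le
          apply mul_le_mul_of_nonneg_left h2 (by positivity)
      _ = g x := by rw [hg_def]; ring
  have hg_int : Integrable g := by
    apply Integrable.const_mul
    exact (integrable_exp_neg_mul_sq (by norm_num : (0:ℝ) < 3 / 10)).comp_sub_right s
  have hf_nonneg : ∀ x, 0 ≤ f x := fun x => by positivity
  have hg_nonneg : ∀ x, 0 ≤ g x := fun x => by positivity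
  have hf_int : IntegrableOn f (Set.Ioi s) := by
    apply Integrable.mono hg_int.restrict
    · exact (Continuous.aestronglyMeasurable (by fun_prop)).restrict
    · rw [ae_restrict_iff' measurableSet_Ioi]
      filter_upwards with x hx
      rw [Real.norm_of_nonneg (hf_nonneg x), Real.norm_of_nonneg (hg_nonneg x)]
      exact hfg x hx
  -- Part 1
  have part1 : (∫ x in Set.Ioi s, f x) ≤
      (1 / 2) * Real.sqrt (105 * Real.sqrt Real.pi / 16) * (Real.pi / 2) ^ ((1 : ℝ) / 4) *
        Real.exp (-M) := by
    have step1 : (∫ x in Set.Ioi s, f x) ≤ ∫ x in Set.Ioi s, g x :=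
      setIntegral_mono_on hf_int hg_int.integrableOn measurableSet_Ioi hfg
    have step2 : (∫ x in Set.Ioi s, g x) ≤ ∫ x, g x :=
      setIntegral_le_integral hg_int (Filter.Eventually.of_forall hg_nonneg)
    have step3 : (∫ x, g x) = (25 / (9 * Real.exp 1 ^ 2) * Real.exp (-(3 * M) / 2)) *
        Real.sqrt (Real.pi / (3 / 10)) := by
      rw [hg_def]
      rw [MeasureTheory.integral_const_mul]
      congr 1
      calc (∫ x : ℝ, Real.exp (-(3 / 10) * (x - s) ^ 2))
          = ∫ x : ℝ, Real.exp (-(3 / 10) * x ^ 2) :=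
            integral_sub_right_eq_self (fun x => Real.exp (-(3 / 10) * x ^ 2)) s
        _ = Real.sqrt (Real.pi / (3 / 10)) := integral_gaussian _
    -- numeric bound
    have hb : Real.sqrt (Real.pi / (3 / 10)) ≤ 3.25 := by
      rw [show (3.25 : ℝ) = Real.sqrt (3.25 ^ 2) from (Real.sqrt_sq (by norm_num)).symm]
      apply Real.sqrt_le_sqrt
      nlinarith [Real.pi_lt_d2]
    have he2 : (65.61 : ℝ) ≤ 9 * Real.exp 1 ^ 2 := by nlinarith [Real.exp_one_gt_d9]
    have ha : 25 / (9 * Real.exp 1 ^ 2) ≤ 25 / 65.61 := by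
      apply div_le_div_of_nonneg_left (by norm_num) (by norm_num) he2
    have hab : 25 / (9 * Real.exp 1 ^ 2) * Real.sqrt (Real.pi / (3 / 10)) ≤ 1.3 := by
      calc 25 / (9 * Real.exp 1 ^ 2) * Real.sqrt (Real.pi / (3 / 10))
          ≤ 25 / 65.61 * 3.25 :=
            mul_le_mul ha hb (Real.sqrt_nonneg _) (by norm_num)
        _ ≤ 1.3 := by norm_num
    have hsqrtpi : (1.77 : ℝ) ≤ Real.sqrt Real.pi := by
      rw [show (1.77 : ℝ) = Real.sqrt (1.77 ^ 2) from (Real.sqrt_sq (by norm_num)).symm]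
      apply Real.sqrt_le_sqrt
      nlinarith [Real.pi_gt_d2]
    have hK : (1.7 : ℝ) ≤ (1 / 2) * Real.sqrt (105 * Real.sqrt Real.pi / 16) := by
      have h34 : (3.4 : ℝ) ≤ Real.sqrt (105 * Real.sqrt Real.pi / 16) := by
        rw [show (3.4 : ℝ) = Real.sqrt (3.4 ^ 2) from (Real.sqrt_sq (by norm_num)).symm]
        apply Real.sqrt_le_sqrt
        nlinarith
      linarith
    have hrpow : (1 : ℝ) ≤ (Real.pi / 2) ^ ((1 : ℝ) / 4) :=
      Real.one_le_rpow (by nlinarith [Real.pi_gt_d2]) (by norm_num)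
    have hKP : (1.3 : ℝ) ≤
        (1 / 2) * Real.sqrt (105 * Real.sqrt Real.pi / 16) * (Real.pi / 2) ^ ((1 : ℝ) / 4) := by
      nlinarith
    have hexpM : Real.exp (-(3 * M) / 2) ≤ Real.exp (-M) := Real.exp_le_exp.2 (by linarith)
    calc (∫ x in Set.Ioi s, f x) ≤
          (25 / (9 * Real.exp 1 ^ 2) * Real.exp (-(3 * M) / 2)) *
            Real.sqrt (Real.pi / (3 / 10)) := le_trans step1 (le_trans step2 step3.le)
      _ = (25 / (9 * Real.exp 1 ^ 2) * Real.sqrt (Real.pi / (3 / 10))) *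
            Real.exp (-(3 * M) / 2) := by ring
      _ ≤ 1.3 * Real.exp (-M) := by
          apply mul_le_mul hab hexpM (Real.exp_pos _).le (by norm_num)
      _ ≤ (1 / 2) * Real.sqrt (105 * Real.sqrt Real.pi / 16) * (Real.pi / 2) ^ ((1 : ℝ) / 4) *
            Real.exp (-M) :=
          mul_le_mul_of_nonneg_right hKP (Real.exp_pos _).le
  -- Part 2
  have hpi : (0 : ℝ) < Real.pi := Real.pi_pos
  have hc : (0 : ℝ) < 3 / (2 * Real.pi) := by positivity
  have hsq : ((3 / (2 * Real.pi)) ^ ((1 : ℝ) / 4)) ^ 2 = Real.sqrt (3 / (2 * Real.pi)) := by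
    rw [← Real.rpow_natCast ((3 / (2 * Real.pi)) ^ ((1 : ℝ) / 4)) 2, ← Real.rpow_mul hc.le,
      Real.sqrt_eq_rpow]
    norm_num
  have hintegrand : ∀ x : ℝ, (max (x ^ 2 - M) 0) ^ 2 *
      ((3 / (2 * Real.pi)) ^ ((1 : ℝ) / 4) * Real.exp (-x ^ 2 / 2)) ^ 2 *
      Real.exp (-x ^ 2 / 2) =
      Real.sqrt (3 / (2 * Real.pi)) *
        ((max (x ^ 2 - M) 0) ^ 2 * Real.exp (-3 * x ^ 2 / 2)) := by
    intro x
    have hexp : Real.exp (-x ^ 2 / 2) ^ 2 * Real.exp (-x ^ 2 / 2) =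
        Real.exp (-3 * x ^ 2 / 2) := by
      rw [sq, ← Real.exp_add, ← Real.exp_add]; ring_nf
    calc (max (x ^ 2 - M) 0) ^ 2 *
          ((3 / (2 * Real.pi)) ^ ((1 : ℝ) / 4) * Real.exp (-x ^ 2 / 2)) ^ 2 *
          Real.exp (-x ^ 2 / 2)
        = ((3 / (2 * Real.pi)) ^ ((1 : ℝ) / 4)) ^ 2 *
          ((max (x ^ 2 - M) 0) ^ 2 * (Real.exp (-x ^ 2 / 2) ^ 2 * Real.exp (-x ^ 2 / 2))) := by
          ring
      _ = Real.sqrt (3 / (2 * Real.pi)) *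
          ((max (x ^ 2 - M) 0) ^ 2 * Real.exp (-3 * x ^ 2 / 2)) := by rw [hsq, hexp]
  set F : ℝ → ℝ := fun x => (max (x ^ 2 - M) 0) ^ 2 * Real.exp (-3 * x ^ 2 / 2) with hF_def
  have hhalf : (∫ x : ℝ, F x) = 2 * ∫ x in Set.Ioi (0 : ℝ), F x := by
    have h := integral_comp_abs (f := F)
    simp only [hF_def, sq_abs] at h
    exact h
  have hcut : (∫ x in Set.Ioi (0 : ℝ), F x) = ∫ x in Set.Ioi s, F x := by
    apply setIntegral_eq_of_subset_of_forall_diff_eq_zero measurableSet_Ioi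
      (Set.Ioi_subset_Ioi hs)
    intro x hx
    obtain ⟨hx0, hxs⟩ := hx
    simp only [Set.mem_Ioi, not_lt] at hxs
    have hxM : x ^ 2 - M ≤ 0 := by nlinarith [Set.mem_Ioi.1 hx0]
    simp only [hF_def, max_eq_right hxM]
    ring
  have hcongr : (∫ x in Set.Ioi s, F x) = ∫ x in Set.Ioi s, f x := by
    apply setIntegral_congr_fun measurableSet_Ioi
    intro x hx
    have hxs : s ≤ x := le_of_lt hx
    have hxM : 0 ≤ x ^ 2 - M := by nlinarith [le_trans hs hxs]
    simp only [hF_def, hf_def, max_eq_left hxM]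
  have part2 : (∫ x : ℝ, (max (x ^ 2 - M) 0) ^ 2 *
      ((3 / (2 * Real.pi)) ^ ((1 : ℝ) / 4) * Real.exp (-x ^ 2 / 2)) ^ 2 *
      Real.exp (-x ^ 2 / 2)) =
      2 * Real.sqrt (3 / (2 * Real.pi)) * ∫ x in Set.Ioi s, f x := by
    simp_rw [hintegrand]
    rw [MeasureTheory.integral_const_mul, hhalf, hcut, hcongr]
    ring
  refine ⟨part1, part2, ?_⟩
  rw [part2]
  have h2c : (0 : ℝ) ≤ 2 * Real.sqrt (3 / (2 * Real.pi)) := by positivity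
  calc 2 * Real.sqrt (3 / (2 * Real.pi)) * ∫ x in Set.Ioi s, f x
      ≤ 2 * Real.sqrt (3 / (2 * Real.pi)) *
        ((1 / 2) * Real.sqrt (105 * Real.sqrt Real.pi / 16) * (Real.pi / 2) ^ ((1 : ℝ) / 4) *
          Real.exp (-M)) := mul_le_mul_of_nonneg_left part1 h2c
    _ = Real.sqrt (3 / (2 * Real.pi)) * Real.sqrt (105 * Real.sqrt Real.pi / 16) *
        (Real.pi / 2) ^ ((1 : ℝ) / 4) * Real.exp (-M) := by ring
end
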